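/- arXiv:2603.25657 — 4 statements merged into one kernel-verified Lean document; each statement's English description precedes it below -/
import Mathlib

section
/- Let F be a quadratic population objective, i.e. there is a symmetric invertible d×d matrix A and a point x⋆ ∈ ℝ^d with ∇F(x) = A(x − x⋆) for all x, and suppose F is μ-strongly convex with respect to ‖·‖ (equivalently ⟨w, A w⟩ ≥ μ‖w‖² for all w). Suppose Assumption B holds with parameter ζ. Fix x̃ ∈ ℝ^d and a positive integer N, let z_1, …, z_N be i.i.d. samples from P, set ∇̂f(x̃) := (1/N)·Σ_{i=1}^N ∇f(x̃, z_i), and let x̄ be the unique point with ∇F(x̄) = ∇F(x̃) − ∇̂f(x̃) (so x̄ = x⋆ − A⁻¹(∇̂f(x̃) − ∇F(x̃))). Then E[‖x̄ − x⋆‖²] ≤ (2/N)·E_{z∼P}[‖A⁻¹∇f(x⋆, z)‖²] + (2ζ²/(N μ²))·‖x̃ − x⋆‖². -/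
open MeasureTheory Matrix Real

noncomputable section

/-- The Hilbert norm `‖x‖ = √⟨x, Qx⟩` induced by a positive definite matrix `Q`. -/
def qnorm {d : ℕ} (Q : Matrix (Fin d) (Fin d) ℝ) (x : Fin d → ℝ) : ℝ :=
  Real.sqrt (x ⬝ᵥ Q.mulVec x)

/-- The dual norm `‖y‖_* = sup {⟨x, y⟩ : ‖x‖ ≤ 1}`. -/
def qdual {d : ℕ} (Q : Matrix (Fin d) (Fin d) ℝ) (y : Fin d → ℝ) : ℝ :=
  sSup {r : ℝ | ∃ x : Fin d → ℝ, qnorm Q x ≤ 1 ∧ r = x ⬝ᵥ y}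

/-- The continuous linear functional `w ↦ ⟨v, w⟩` (Euclidean dot product); having
`dotCLM v` as Fréchet derivative at `x` means that `v` is the (Euclidean) gradient at `x`. -/
def dotCLM {d : ℕ} (v : Fin d → ℝ) : (Fin d → ℝ) →L[ℝ] ℝ :=
  LinearMap.toContinuousLinearMap
    { toFun := fun w => v ⬝ᵥ w
      map_add' := fun a b => by simp [dotProduct_add]
      map_smul' := fun c a => by simp [dotProduct_smul] }

namespace VRAux

variable {d : ℕ} {Q : Matrix (Fin d) (Fin d) ℝ}

lemma qform_nonneg (hQ : Q.PosDef) (x : Fin d → ℝ) : 0 ≤ x ⬝ᵥ Q.mulVec x := by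
  simpa using hQ.posSemidef.dotProduct_mulVec_nonneg x

lemma qnorm_nonneg (x : Fin d → ℝ) : 0 ≤ qnorm Q x := Real.sqrt_nonneg _

lemma qnorm_sq (hQ : Q.PosDef) (x : Fin d → ℝ) : qnorm Q x ^ 2 = x ⬝ᵥ Q.mulVec x :=
  Real.sq_sqrt (qform_nonneg hQ x)

lemma qnorm_zero : qnorm Q 0 = 0 := by simp [qnorm]

lemma qtrans (hQ : Q.PosDef) : Qᵀ = Q := by
  have := hQ.isHermitian
  rwa [Matrix.IsHermitian, Matrix.conjTranspose_eq_transpose_of_trivial] at this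

lemma qdot_symm (hQ : Q.PosDef) (x y : Fin d → ℝ) :
    x ⬝ᵥ Q.mulVec y = y ⬝ᵥ Q.mulVec x := by
  rw [Matrix.dotProduct_mulVec]
  conv_lhs => rw [show Q = Qᵀᵀ by rw [Matrix.transpose_transpose]]
  rw [Matrix.vecMul_transpose, qtrans hQ, dotProduct_comm]

lemma qCS (hQ : Q.PosDef) (x y : Fin d → ℝ) :
    (x ⬝ᵥ Q.mulVec y) ^ 2 ≤ (x ⬝ᵥ Q.mulVec x) * (y ⬝ᵥ Q.mulVec y) := by
  have key : ∀ t : ℝ, 0 ≤ (x ⬝ᵥ Q.mulVec x) * (t * t) + (2 * (x ⬝ᵥ Q.mulVec y)) * t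
      + (y ⬝ᵥ Q.mulVec y) := by
    intro t
    have h0 : 0 ≤ (t • x + y) ⬝ᵥ Q.mulVec (t • x + y) := qform_nonneg hQ _
    have hsym := qdot_symm hQ y x
    simp only [Matrix.mulVec_add, Matrix.mulVec_smul, dotProduct_add,
      add_dotProduct, smul_dotProduct, dotProduct_smul,
      smul_eq_mul] at h0
    rw [hsym] at h0
    nlinarith [h0]
  have hd := discrim_le_zero key
  simp only [discrim] at hd
  nlinarith [hd]

lemma qdot_le (hQ : Q.PosDef) (x y : Fin d → ℝ) :
    x ⬝ᵥ Q.mulVec y ≤ qnorm Q x * qnorm Q y := by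
  calc x ⬝ᵥ Q.mulVec y ≤ |x ⬝ᵥ Q.mulVec y| := le_abs_self _
    _ = Real.sqrt ((x ⬝ᵥ Q.mulVec y) ^ 2) := (Real.sqrt_sq_eq_abs _).symm
    _ ≤ Real.sqrt ((x ⬝ᵥ Q.mulVec x) * (y ⬝ᵥ Q.mulVec y)) :=
        Real.sqrt_le_sqrt (qCS hQ x y)
    _ = qnorm Q x * qnorm Q y := by
        rw [Real.sqrt_mul (qform_nonneg hQ x)]; rfl

lemma qnorm_add_le (hQ : Q.PosDef) (x y : Fin d → ℝ) :
    qnorm Q (x + y) ≤ qnorm Q x + qnorm Q y := by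
  have he : (x + y) ⬝ᵥ Q.mulVec (x + y)
      = x ⬝ᵥ Q.mulVec x + 2 * (x ⬝ᵥ Q.mulVec y) + y ⬝ᵥ Q.mulVec y := by
    have hsym := qdot_symm hQ y x
    simp only [Matrix.mulVec_add, dotProduct_add, add_dotProduct]
    linarith
  have h2 : (x + y) ⬝ᵥ Q.mulVec (x + y) ≤ (qnorm Q x + qnorm Q y) ^ 2 := by
    rw [he]
    have := qdot_le hQ x y
    nlinarith [qnorm_sq hQ x, qnorm_sq hQ y, qnorm_nonneg (Q := Q) x, qnorm_nonneg (Q := Q) y]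
  calc qnorm Q (x + y) = Real.sqrt ((x + y) ⬝ᵥ Q.mulVec (x + y)) := rfl
    _ ≤ Real.sqrt ((qnorm Q x + qnorm Q y) ^ 2) := Real.sqrt_le_sqrt h2
    _ = |qnorm Q x + qnorm Q y| := Real.sqrt_sq_eq_abs _
    _ = qnorm Q x + qnorm Q y := abs_of_nonneg (add_nonneg (qnorm_nonneg x) (qnorm_nonneg y))

lemma qnorm_smul (c : ℝ) (x : Fin d → ℝ) : qnorm Q (c • x) = |c| * qnorm Q x := by
  unfold qnorm
  rw [show (c • x) ⬝ᵥ Q.mulVec (c • x) = c ^ 2 * (x ⬝ᵥ Q.mulVec x) by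
    simp only [Matrix.mulVec_smul, smul_dotProduct, dotProduct_smul,
      smul_eq_mul]; ring]
  rw [Real.sqrt_mul (sq_nonneg c), Real.sqrt_sq_eq_abs]

lemma qnorm_neg (x : Fin d → ℝ) : qnorm Q (-x) = qnorm Q x := by
  rw [← neg_one_smul ℝ x, qnorm_smul]; simp

lemma sq_comp_le (hQ : Q.PosDef) (x : Fin d → ℝ) (k : Fin d) :
    (x k) ^ 2 ≤ Q⁻¹ k k * (x ⬝ᵥ Q.mulVec x) := by
  have hdet : IsUnit Q.det := hQ.isUnit.map (Matrix.detMonoidHom)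
  set e : Fin d → ℝ := Pi.single k 1 with he
  have hQe : Q.mulVec (Q⁻¹.mulVec e) = e := by
    rw [Matrix.mulVec_mulVec, Matrix.mul_nonsing_inv _ hdet, Matrix.one_mulVec]
  have h1 : x ⬝ᵥ Q.mulVec (Q⁻¹.mulVec e) = x k := by
    rw [hQe, he, dotProduct_single, mul_one]
  have h2 : (Q⁻¹.mulVec e) ⬝ᵥ Q.mulVec (Q⁻¹.mulVec e) = Q⁻¹ k k := by
    rw [hQe, he, dotProduct_single, mul_one, Matrix.mulVec_single]
    simp
  have hcs := qCS hQ x (Q⁻¹.mulVec e)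
  rw [h1, h2] at hcs
  linarith [hcs]


lemma inv_diag_nonneg (hQ : Q.PosDef) (k : Fin d) : 0 ≤ Q⁻¹ k k := by
  have := qform_nonneg hQ.inv (Pi.single k 1)
  simpa [single_dotProduct, Matrix.mulVec_single] using this

lemma abs_comp_le (hQ : Q.PosDef) (x : Fin d → ℝ) (k : Fin d) :
    |x k| ≤ Real.sqrt (Q⁻¹ k k) * qnorm Q x := by
  calc |x k| = Real.sqrt ((x k) ^ 2) := (Real.sqrt_sq_eq_abs _).symm
    _ ≤ Real.sqrt (Q⁻¹ k k * (x ⬝ᵥ Q.mulVec x)) := Real.sqrt_le_sqrt (sq_comp_le hQ x k)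
    _ = Real.sqrt (Q⁻¹ k k) * qnorm Q x := by
        rw [Real.sqrt_mul (inv_diag_nonneg hQ k)]; rfl

lemma qnorm_sum_le (hQ : Q.PosDef) {ι : Type*} (s : Finset ι) (w : ι → Fin d → ℝ) :
    qnorm Q (∑ m ∈ s, w m) ≤ ∑ m ∈ s, qnorm Q (w m) := by
  classical
  induction s using Finset.induction_on with
  | empty => simp [qnorm_zero]
  | insert a s' hns ih =>
      rw [Finset.sum_insert hns, Finset.sum_insert hns]
      exact le_trans (qnorm_add_le hQ _ _) (by linarith [ih])

lemma opBound (hQ : Q.PosDef) (M : Matrix (Fin d) (Fin d) ℝ) :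
    ∃ C : ℝ, 0 ≤ C ∧ ∀ v, qnorm Q (M.mulVec v) ≤ C * qnorm Q v := by
  classical
  refine ⟨∑ m, qnorm Q (fun k => M k m) * Real.sqrt (Q⁻¹ m m), ?_, ?_⟩
  · exact Finset.sum_nonneg fun m _ => mul_nonneg (qnorm_nonneg _) (Real.sqrt_nonneg _)
  intro v
  have hdecomp : M.mulVec v = ∑ m, v m • (fun k => M k m) := by
    funext k
    simp only [Matrix.mulVec, dotProduct, Finset.sum_apply, Pi.smul_apply,
      smul_eq_mul]
    exact Finset.sum_congr rfl fun m _ => mul_comm _ _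
  rw [hdecomp]
  calc qnorm Q (∑ m, v m • (fun k => M k m))
      ≤ ∑ m, qnorm Q (v m • (fun k => M k m)) := qnorm_sum_le hQ _ _
    _ = ∑ m, |v m| * qnorm Q (fun k => M k m) := by
        exact Finset.sum_congr rfl fun m _ => qnorm_smul _ _
    _ ≤ ∑ m, (Real.sqrt (Q⁻¹ m m) * qnorm Q v) * qnorm Q (fun k => M k m) :=
        Finset.sum_le_sum fun m _ =>
          mul_le_mul_of_nonneg_right (abs_comp_le hQ v m) (qnorm_nonneg _)
    _ = (∑ m, qnorm Q (fun k => M k m) * Real.sqrt (Q⁻¹ m m)) * qnorm Q v := by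
        rw [Finset.sum_mul]
        exact Finset.sum_congr rfl fun m _ => by ring

lemma qdual_bddAbove (hQ : Q.PosDef) (v : Fin d → ℝ) :
    BddAbove {r : ℝ | ∃ x : Fin d → ℝ, qnorm Q x ≤ 1 ∧ r = x ⬝ᵥ v} := by
  have hdet : IsUnit Q.det := hQ.isUnit.map (Matrix.detMonoidHom)
  refine ⟨qnorm Q (Q⁻¹.mulVec v), ?_⟩
  rintro r ⟨x, hx, rfl⟩
  have hv : x ⬝ᵥ v = x ⬝ᵥ Q.mulVec (Q⁻¹.mulVec v) := by
    rw [Matrix.mulVec_mulVec, Matrix.mul_nonsing_inv _ hdet, Matrix.one_mulVec]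
  rw [hv]
  calc x ⬝ᵥ Q.mulVec (Q⁻¹.mulVec v) ≤ qnorm Q x * qnorm Q (Q⁻¹.mulVec v) := qdot_le hQ _ _
    _ ≤ 1 * qnorm Q (Q⁻¹.mulVec v) := by
        exact mul_le_mul_of_nonneg_right hx (qnorm_nonneg _)
    _ = qnorm Q (Q⁻¹.mulVec v) := one_mul _

lemma qdual_nonneg (hQ : Q.PosDef) (v : Fin d → ℝ) : 0 ≤ qdual Q v := by
  refine le_csSup (qdual_bddAbove hQ v) ⟨0, ?_, ?_⟩
  · simp [qnorm_zero]
  · simp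

lemma dot_le_qnorm_mul_qdual (hQ : Q.PosDef) (w v : Fin d → ℝ) :
    w ⬝ᵥ v ≤ qnorm Q w * qdual Q v := by
  rcases eq_or_ne w 0 with rfl | hw
  · simp [qnorm_zero]
  · have hq : 0 < qnorm Q w := Real.sqrt_pos.2 (by simpa using hQ.dotProduct_mulVec_pos hw)
    have hmem : ((qnorm Q w)⁻¹ • w) ⬝ᵥ v
        ∈ {r : ℝ | ∃ x : Fin d → ℝ, qnorm Q x ≤ 1 ∧ r = x ⬝ᵥ v} := by
      refine ⟨(qnorm Q w)⁻¹ • w, ?_, rfl⟩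
      rw [qnorm_smul, abs_of_nonneg (inv_nonneg.2 hq.le), inv_mul_cancel₀ hq.ne']
    have hle : ((qnorm Q w)⁻¹ • w) ⬝ᵥ v ≤ qdual Q v :=
      le_csSup (qdual_bddAbove hQ v) hmem
    rw [smul_dotProduct, smul_eq_mul] at hle
    calc w ⬝ᵥ v = qnorm Q w * ((qnorm Q w)⁻¹ * (w ⬝ᵥ v)) := by
          field_simp
      _ ≤ qnorm Q w * qdual Q v := mul_le_mul_of_nonneg_left hle hq.le

lemma continuous_qform (Q : Matrix (Fin d) (Fin d) ℝ) :
    Continuous fun v : Fin d → ℝ => v ⬝ᵥ Q.mulVec v := by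
  simp only [dotProduct, Matrix.mulVec]
  exact continuous_finset_sum _ fun k _ => (continuous_apply k).mul
    (continuous_finset_sum _ fun l _ => continuous_const.mul (continuous_apply l))

lemma continuous_qnorm (Q : Matrix (Fin d) (Fin d) ℝ) : Continuous (qnorm Q) :=
  Real.continuous_sqrt.comp (continuous_qform Q)

lemma continuous_mulVec (M : Matrix (Fin d) (Fin d) ℝ) :
    Continuous fun v : Fin d → ℝ => M.mulVec v := by
  refine continuous_pi fun k => ?_
  simp only [Matrix.mulVec, dotProduct]
  exact continuous_finset_sum _ fun l _ => continuous_const.mul (continuous_apply l)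

section Pi

variable {Z : Type*} [MeasureSpace Z] [IsProbabilityMeasure (volume : Measure Z)]

lemma pi_single {N : ℕ} (i : Fin N) {u : Z → ℝ} (hu : Integrable u) :
    Integrable (fun ω : Fin N → Z => u (ω i)) ∧
      (∫ ω : Fin N → Z, u (ω i)) = ∫ z, u z := by
  classical
  set g : Fin N → Z → ℝ := fun m => if m = i then u else fun _ => (1 : ℝ) with hg
  have hgint : ∀ m, Integrable (g m) := by
    intro m
    by_cases hm : m = i <;> simp [g, hm, hu, integrable_const]
  have hpt : (fun ω : Fin N → Z => u (ω i)) = fun ω => ∏ m, g m (ω m) := by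
    funext ω
    rw [Finset.prod_eq_single i (fun b _ hb => by simp [g, hb])
      (fun hni => absurd (Finset.mem_univ i) hni)]
    simp [g]
  constructor
  · rw [hpt]; exact Integrable.fintype_prod hgint
  · rw [hpt, integral_fintype_prod_volume_eq_prod]
    rw [Finset.prod_eq_single i (fun b _ hb => by simp [g, hb])
      (fun hni => absurd (Finset.mem_univ i) hni)]
    simp [g]

lemma pi_pair {N : ℕ} {i j : Fin N} (hij : i ≠ j) {u w : Z → ℝ}
    (hu : Integrable u) (hw : Integrable w) :
    Integrable (fun ω : Fin N → Z => u (ω i) * w (ω j)) ∧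
      (∫ ω : Fin N → Z, u (ω i) * w (ω j)) = (∫ z, u z) * ∫ z, w z := by
  classical
  set g : Fin N → Z → ℝ := fun m => if m = i then u else if m = j then w else fun _ => (1 : ℝ)
    with hg
  have hgint : ∀ m, Integrable (g m) := by
    intro m
    by_cases hmi : m = i
    · simp [g, hmi, hu]
    · by_cases hmj : m = j <;> simp [g, hmi, hmj, hw, integrable_const, hij.symm]
  have hpt : (fun ω : Fin N → Z => u (ω i) * w (ω j)) = fun ω => ∏ m, g m (ω m) := by
    funext ω
    have hsub : ∏ m ∈ ({i, j} : Finset (Fin N)), g m (ω m) = ∏ m, g m (ω m) :=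
      Finset.prod_subset (Finset.subset_univ _) (by
        intro x _ hx
        simp only [Finset.mem_insert, Finset.mem_singleton, not_or] at hx
        simp [g, hx.1, hx.2])
    rw [← hsub, Finset.prod_pair hij]
    simp [g, hij.symm]
  have hval : ∏ m, ∫ z, g m z = (∫ z, u z) * ∫ z, w z := by
    have hsub : ∏ m ∈ ({i, j} : Finset (Fin N)), ∫ z, g m z = ∏ m, ∫ z, g m z :=
      Finset.prod_subset (Finset.subset_univ _) (by
        intro x _ hx
        simp only [Finset.mem_insert, Finset.mem_singleton, not_or] at hx
        simp [g, hx.1, hx.2])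
    rw [← hsub, Finset.prod_pair hij]
    simp [g, hij.symm]
  constructor
  · rw [hpt]; exact Integrable.fintype_prod hgint
  · rw [hpt, integral_fintype_prod_volume_eq_prod, hval]

end Pi

lemma sq_add_le {a b c : ℝ} (h : c ≤ a + b) (hc : 0 ≤ c) (ha : 0 ≤ a) (hb : 0 ≤ b) :
    c ^ 2 ≤ 2 * a ^ 2 + 2 * b ^ 2 := by
  nlinarith [mul_le_mul h h hc (by linarith : (0:ℝ) ≤ a + b), sq_nonneg (a - b)]

end VRAux

open VRAux in
/-- epoch-wise population solution for quadratic objectives,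
Lemma `vr_quadratic_key`. -/
theorem statement0
    {d : ℕ} (hd : 1 ≤ d)
    (Q : Matrix (Fin d) (Fin d) ℝ) (hQ : Q.PosDef)
    {Z : Type*} [MeasurableSpace Z] (P : Measure Z) [IsProbabilityMeasure P]
    (f : (Fin d → ℝ) → Z → ℝ) (f' : (Fin d → ℝ) → Z → Fin d → ℝ)
    -- `f(·,z)` is differentiable with gradient `∇f(x,z) = f' x z`
    (hfdiff : ∀ z x, HasFDerivAt (fun y => f y z) (dotCLM (f' x z)) x)
    (hfmeas : ∀ x, AEStronglyMeasurable (fun z => f' x z) P)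
    (F : (Fin d → ℝ) → ℝ) (F' : (Fin d → ℝ) → Fin d → ℝ)
    -- `F = E_{z∼P}[f(·,z)]` with gradient `∇F = E_{z∼P}[∇f(·,z)]`
    (hF : ∀ x, F x = ∫ z, f x z ∂P)
    (hf'int : ∀ x, Integrable (fun z => f' x z) P)
    (hF' : ∀ x, F' x = ∫ z, f' x z ∂P)
    -- finite second moments of the stochastic gradients
    (hmom : ∀ x, Integrable (fun z => (qnorm Q (f' x z)) ^ 2) P)
    -- `F` is quadratic: `∇F(x) = A (x − x⋆)` with `A` symmetric and invertible
    (A : Matrix (Fin d) (Fin d) ℝ) (hA : A.IsSymm) (hAunit : IsUnit A)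
    (xstar : Fin d → ℝ) (hquad : ∀ x, F' x = A.mulVec (x - xstar))
    -- μ-strong convexity: `⟨w, A w⟩ ≥ μ ‖w‖²`
    (μ : ℝ) (hμ : 0 < μ)
    (hsc : ∀ w : Fin d → ℝ, μ * (qnorm Q w) ^ 2 ≤ w ⬝ᵥ A.mulVec w)
    -- Assumption B with parameter ζ
    (ζ : ℝ) (hζ : 0 ≤ ζ)
    (hBint : ∀ x x', Integrable
      (fun z => (qdual Q ((f' x z - F' x) - (f' x' z - F' x'))) ^ 2) P)
    (hB : ∀ x x', ∫ z, (qdual Q ((f' x z - F' x) - (f' x' z - F' x'))) ^ 2 ∂P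
      ≤ ζ ^ 2 * (qnorm Q (x - x')) ^ 2)
    -- the epoch: `N` i.i.d. samples, averaged gradient at `x̃`, and `x̄` the unique
    -- point with `∇F(x̄) = ∇F(x̃) − ∇̂f(x̃)`
    (N : ℕ) (hN : 0 < N) (xt : Fin d → ℝ)
    (xbar : (Fin N → Z) → Fin d → ℝ)
    (hxbar : ∀ ω, F' (xbar ω) = F' xt - (N : ℝ)⁻¹ • ∑ i : Fin N, f' xt (ω i)) :
    ∫⁻ ω, ENNReal.ofReal ((qnorm Q (xbar ω - xstar)) ^ 2)
        ∂(Measure.pi fun _ : Fin N => P)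
      ≤ ENNReal.ofReal
          ((2 / N) * (∫ z, (qnorm Q (A⁻¹.mulVec (f' xstar z))) ^ 2 ∂P)
            + (2 * ζ ^ 2 / (N * μ ^ 2)) * (qnorm Q (xt - xstar)) ^ 2) := by
  classical
  letI : MeasureSpace Z := ⟨P⟩
  haveI hPvol : IsProbabilityMeasure (volume : Measure Z) := ‹IsProbabilityMeasure P›
  have hpi : (Measure.pi fun _ : Fin N => P) = (volume : Measure (Fin N → Z)) := rfl
  rw [hpi]
  have hdet : IsUnit A.det := (Matrix.isUnit_iff_isUnit_det A).mp hAunit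
  have hNR : ((N : ℝ)) ≠ 0 := Nat.cast_ne_zero.2 hN.ne'
  set h : Z → Fin d → ℝ := fun z => f' xt z - F' xt with hh
  set hc : Fin d → Z → ℝ := fun k z => h z k with hhc
  set R : Matrix (Fin d) (Fin d) ℝ := A⁻¹ᵀ * Q * A⁻¹ with hR
  -- quadratic form expansion of `v ↦ ‖A⁻¹ v‖²`
  have phi_eq : ∀ v : Fin d → ℝ,
      qnorm Q (A⁻¹.mulVec v) ^ 2 = ∑ k, ∑ l, R k l * (v k * v l) := by
    intro v
    rw [VRAux.qnorm_sq hQ]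
    have h1 : A⁻¹.mulVec v ⬝ᵥ Q.mulVec (A⁻¹.mulVec v) = v ⬝ᵥ R.mulVec v := by
      rw [Matrix.mulVec_mulVec]
      rw [show A⁻¹.mulVec v = v ᵥ* A⁻¹ᵀ from (Matrix.vecMul_transpose _ _).symm]
      rw [← Matrix.dotProduct_mulVec, Matrix.mulVec_mulVec, ← Matrix.mul_assoc, hR]
    rw [h1]
    simp only [dotProduct, Matrix.mulVec, Finset.mul_sum]
    exact Finset.sum_congr rfl fun k _ => Finset.sum_congr rfl fun l _ => by ring
  -- the recentred point
  have hsum_h : ∀ ω : Fin N → Z, ∑ i : Fin N, f' xt (ω i)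
      = (∑ i : Fin N, h (ω i)) + (N : ℝ) • F' xt := by
    intro ω
    have e : (∑ i : Fin N, h (ω i)) = (∑ i : Fin N, f' xt (ω i)) - (N : ℝ) • F' xt := by
      rw [Nat.cast_smul_eq_nsmul]
      simp only [hh]
      rw [Finset.sum_sub_distrib]
      congr 1
      simp [Finset.sum_const, Finset.card_univ]
    rw [e]; abel
  have e1 : ∀ ω : Fin N → Z, xbar ω - xstar
      = A⁻¹.mulVec (-((N : ℝ)⁻¹ • ∑ i : Fin N, h (ω i))) := by
    intro ω
    have h0 : A.mulVec (xbar ω - xstar) = -((N : ℝ)⁻¹ • ∑ i : Fin N, h (ω i)) := by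
      rw [← hquad, hxbar, hsum_h ω, smul_add, smul_smul, inv_mul_cancel₀ hNR, one_smul]
      abel
    rw [← h0, Matrix.mulVec_mulVec, Matrix.nonsing_inv_mul _ hdet, Matrix.one_mulVec]
  have key2 : ∀ ω : Fin N → Z, qnorm Q (xbar ω - xstar) ^ 2
      = ∑ k, ∑ l, ∑ i : Fin N, ∑ j : Fin N,
          (((N : ℝ)⁻¹) ^ 2 * R k l) * (hc k (ω i) * hc l (ω j)) := by
    intro ω
    rw [e1 ω, Matrix.mulVec_neg, VRAux.qnorm_neg, Matrix.mulVec_smul, VRAux.qnorm_smul,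
      mul_pow, sq_abs, phi_eq]
    rw [Finset.mul_sum]
    refine Finset.sum_congr rfl fun k _ => ?_
    rw [Finset.mul_sum]
    refine Finset.sum_congr rfl fun l _ => ?_
    have hk : (∑ i : Fin N, h (ω i)) k = ∑ i : Fin N, hc k (ω i) := by
      simp [hhc, Finset.sum_apply]
    have hl : (∑ i : Fin N, h (ω i)) l = ∑ j : Fin N, hc l (ω j) := by
      simp [hhc, Finset.sum_apply]
    rw [hk, hl]
    simp only [Finset.sum_mul, Finset.mul_sum]
    rw [Finset.sum_comm]
    refine Finset.sum_congr rfl fun i _ => ?_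
    refine Finset.sum_congr rfl fun j _ => ?_
    ring
  -- measurability and integrability over `P`
  have hmeas_h : AEStronglyMeasurable h P := (hfmeas xt).sub aestronglyMeasurable_const
  have hmeas_hc : ∀ k, AEStronglyMeasurable (hc k) P := fun k =>
    (continuous_apply k).comp_aestronglyMeasurable hmeas_h
  have hq2 : Integrable (fun z => qnorm Q (h z) ^ 2) P := by
    refine Integrable.mono'
      (g := fun z => 2 * qnorm Q (f' xt z) ^ 2 + 2 * qnorm Q (F' xt) ^ 2)
      (((hmom xt).const_mul 2).add (integrable_const _))
      (((VRAux.continuous_qnorm Q).pow 2).comp_aestronglyMeasurable hmeas_h) ?_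
    refine Filter.Eventually.of_forall fun z => ?_
    have htri : qnorm Q (h z) ≤ qnorm Q (f' xt z) + qnorm Q (F' xt) := by
      have e : h z = f' xt z + -F' xt := by simp [hh, sub_eq_add_neg]
      rw [e]
      exact le_trans (VRAux.qnorm_add_le hQ _ _) (by rw [VRAux.qnorm_neg])
    rw [Real.norm_eq_abs, abs_of_nonneg (sq_nonneg _)]
    exact VRAux.sq_add_le htri (VRAux.qnorm_nonneg _) (VRAux.qnorm_nonneg _)
      (VRAux.qnorm_nonneg _)
  have hq1 : Integrable (fun z => qnorm Q (h z)) P := by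
    refine Integrable.mono' (g := fun z => 1 + qnorm Q (h z) ^ 2)
      ((integrable_const _).add hq2)
      ((VRAux.continuous_qnorm Q).comp_aestronglyMeasurable hmeas_h) ?_
    refine Filter.Eventually.of_forall fun z => ?_
    rw [Real.norm_eq_abs, abs_of_nonneg (VRAux.qnorm_nonneg _)]
    nlinarith [VRAux.qnorm_nonneg (Q := Q) (h z)]
  have hInt_hc : ∀ k, Integrable (hc k) P := by
    intro k
    refine Integrable.mono' (g := fun z => Real.sqrt (Q⁻¹ k k) * qnorm Q (h z))
      (hq1.const_mul _) (hmeas_hc k) ?_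
    exact Filter.Eventually.of_forall fun z => by
      rw [Real.norm_eq_abs]; exact VRAux.abs_comp_le hQ (h z) k
  have hInt_hchc : ∀ k l, Integrable (fun z => hc k z * hc l z) P := by
    intro k l
    refine Integrable.mono'
      (g := fun z => (Real.sqrt (Q⁻¹ k k) * Real.sqrt (Q⁻¹ l l)) * qnorm Q (h z) ^ 2)
      (hq2.const_mul _) ((hmeas_hc k).mul (hmeas_hc l)) ?_
    refine Filter.Eventually.of_forall fun z => ?_
    rw [Real.norm_eq_abs, abs_mul]
    calc |hc k z| * |hc l z|
        ≤ (Real.sqrt (Q⁻¹ k k) * qnorm Q (h z)) * (Real.sqrt (Q⁻¹ l l) * qnorm Q (h z)) :=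
          mul_le_mul (VRAux.abs_comp_le hQ (h z) k) (VRAux.abs_comp_le hQ (h z) l)
            (abs_nonneg _) (mul_nonneg (Real.sqrt_nonneg _) (VRAux.qnorm_nonneg _))
      _ = (Real.sqrt (Q⁻¹ k k) * Real.sqrt (Q⁻¹ l l)) * qnorm Q (h z) ^ 2 := by ring
  have hzero : ∀ k, (∫ z, hc k z ∂P) = 0 := by
    intro k
    have hproj : Integrable (fun z => f' xt z k) P :=
      (ContinuousLinearMap.proj (R := ℝ) (φ := fun _ : Fin d => ℝ) k).integrable_comp
        (hf'int xt)
    have hval : (∫ z, f' xt z k ∂P) = F' xt k := by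
      have hcc := (ContinuousLinearMap.proj (R := ℝ) (φ := fun _ : Fin d => ℝ)
        k).integral_comp_comm (hf'int xt)
      calc (∫ z, f' xt z k ∂P) = (∫ z, f' xt z ∂P) k := by simpa using hcc
        _ = F' xt k := by rw [← hF' xt]
    have e : (fun z => hc k z) = fun z => f' xt z k - F' xt k := by
      funext z; simp [hhc, hh]
    rw [e, integral_sub hproj (integrable_const _), hval, integral_const]
    simp
  -- integrability and value of each product term over the product measure
  have hTint : ∀ (k l : Fin d) (i j : Fin N),
      Integrable (fun ω : Fin N → Z => hc k (ω i) * hc l (ω j)) := by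
    intro k l i j
    by_cases hij : i = j
    · subst hij
      exact (VRAux.pi_single i (hInt_hchc k l)).1
    · exact (VRAux.pi_pair hij (hInt_hc k) (hInt_hc l)).1
  have hTval : ∀ (k l : Fin d) (i j : Fin N),
      (∫ ω : Fin N → Z, hc k (ω i) * hc l (ω j))
        = if i = j then (∫ z, hc k z * hc l z ∂P) else 0 := by
    intro k l i j
    by_cases hij : i = j
    · subst hij; rw [if_pos rfl]
      exact (VRAux.pi_single i (hInt_hchc k l)).2
    · rw [if_neg hij]
      have e := (VRAux.pi_pair hij (hInt_hc k) (hInt_hc l)).2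
      rw [e]
      have ek : (∫ z, hc k z) = 0 := hzero k
      rw [ek, zero_mul]
  have hIntsum : ∀ k l, Integrable (fun ω : Fin N → Z => ∑ i : Fin N, ∑ j : Fin N,
      (((N : ℝ)⁻¹) ^ 2 * R k l) * (hc k (ω i) * hc l (ω j))) :=
    fun k l => integrable_finset_sum _ fun i _ => integrable_finset_sum _ fun j _ =>
      (hTint k l i j).const_mul _
  have hIntegrand : Integrable (fun ω : Fin N → Z => qnorm Q (xbar ω - xstar) ^ 2) := by
    have e : (fun ω : Fin N → Z => qnorm Q (xbar ω - xstar) ^ 2)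
        = fun ω => ∑ k, ∑ l, ∑ i : Fin N, ∑ j : Fin N,
            (((N : ℝ)⁻¹) ^ 2 * R k l) * (hc k (ω i) * hc l (ω j)) := funext key2
    rw [e]
    exact integrable_finset_sum _ fun k _ => integrable_finset_sum _ fun l _ => hIntsum k l
  have hIval : (∫ ω : Fin N → Z, qnorm Q (xbar ω - xstar) ^ 2)
      = (N : ℝ)⁻¹ * ∑ k, ∑ l, R k l * (∫ z, hc k z * hc l z ∂P) := by
    have e : (fun ω : Fin N → Z => qnorm Q (xbar ω - xstar) ^ 2)
        = fun ω => ∑ k, ∑ l, ∑ i : Fin N, ∑ j : Fin N,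
            (((N : ℝ)⁻¹) ^ 2 * R k l) * (hc k (ω i) * hc l (ω j)) := funext key2
    rw [e]
    rw [integral_finset_sum _ (fun k _ => integrable_finset_sum _ fun l _ => hIntsum k l)]
    rw [Finset.mul_sum]
    refine Finset.sum_congr rfl fun k _ => ?_
    rw [integral_finset_sum _ (fun l _ => hIntsum k l)]
    rw [Finset.mul_sum]
    refine Finset.sum_congr rfl fun l _ => ?_
    rw [integral_finset_sum _ (fun i _ => integrable_finset_sum _ fun j _ =>
      (hTint k l i j).const_mul _)]
    have estep : ∀ i : Fin N, (∫ ω : Fin N → Z, ∑ j : Fin N,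
        (((N : ℝ)⁻¹) ^ 2 * R k l) * (hc k (ω i) * hc l (ω j)))
        = (((N : ℝ)⁻¹) ^ 2 * R k l) * (∫ z, hc k z * hc l z ∂P) := by
      intro i
      rw [integral_finset_sum _ (fun j _ => (hTint k l i j).const_mul _)]
      have e2 : ∀ j : Fin N, (∫ ω : Fin N → Z,
          (((N : ℝ)⁻¹) ^ 2 * R k l) * (hc k (ω i) * hc l (ω j)))
          = (((N : ℝ)⁻¹) ^ 2 * R k l) * (if i = j then (∫ z, hc k z * hc l z ∂P) else 0) := by
        intro j
        rw [integral_const_mul, hTval k l i j]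
      rw [Finset.sum_congr rfl fun j _ => e2 j]
      rw [← Finset.mul_sum]
      congr 1
      rw [Finset.sum_ite_eq]
      simp
    rw [Finset.sum_congr rfl fun i _ => estep i, Finset.sum_const, Finset.card_univ,
      Fintype.card_fin, nsmul_eq_mul]
    field_simp
  -- back to an integral over `P`
  have hPhiH_int : Integrable (fun z => qnorm Q (A⁻¹.mulVec (h z)) ^ 2) P := by
    have e : (fun z => qnorm Q (A⁻¹.mulVec (h z)) ^ 2)
        = fun z => ∑ k, ∑ l, R k l * (hc k z * hc l z) := funext fun z => phi_eq (h z)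
    rw [e]
    exact integrable_finset_sum _ fun k _ => integrable_finset_sum _ fun l _ =>
      (hInt_hchc k l).const_mul _
  have hPhiVal : (∑ k, ∑ l, R k l * (∫ z, hc k z * hc l z ∂P))
      = ∫ z, qnorm Q (A⁻¹.mulVec (h z)) ^ 2 ∂P := by
    have e : (fun z => qnorm Q (A⁻¹.mulVec (h z)) ^ 2)
        = fun z => ∑ k, ∑ l, R k l * (hc k z * hc l z) := funext fun z => phi_eq (h z)
    rw [e]
    rw [integral_finset_sum _ (fun k _ => (integrable_finset_sum _ fun l _ =>
      (hInt_hchc k l).const_mul (R k l) : Integrable (fun z => ∑ l, R k l * (hc k z * hc l z)) P))]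
    refine Finset.sum_congr rfl fun k _ => ?_
    rw [integral_finset_sum _ (fun l _ => (hInt_hchc k l).const_mul _)]
    refine Finset.sum_congr rfl fun l _ => ?_
    rw [integral_const_mul]
  -- the strong-convexity bound on `A⁻¹`
  have hFstar : F' xstar = 0 := by rw [hquad xstar, sub_self, Matrix.mulVec_zero]
  have keyA : ∀ v, qnorm Q (A⁻¹.mulVec v) ≤ μ⁻¹ * qdual Q v := by
    intro v
    set w := A⁻¹.mulVec v with hw
    have hAw : A.mulVec w = v := by
      rw [hw, Matrix.mulVec_mulVec, Matrix.mul_nonsing_inv _ hdet, Matrix.one_mulVec]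
    have h1 : μ * qnorm Q w ^ 2 ≤ w ⬝ᵥ v := by
      have := hsc w
      rwa [hAw] at this
    have h2 : w ⬝ᵥ v ≤ qnorm Q w * qdual Q v := VRAux.dot_le_qnorm_mul_qdual hQ w v
    rcases eq_or_lt_of_le (VRAux.qnorm_nonneg (Q := Q) w) with hq0 | hqpos
    · calc qnorm Q w = 0 := hq0.symm
        _ ≤ μ⁻¹ * qdual Q v :=
            mul_nonneg (inv_nonneg.2 hμ.le) (VRAux.qdual_nonneg hQ v)
    · have h3 : μ * qnorm Q w ≤ qdual Q v := by
        have h4 : (μ * qnorm Q w) * qnorm Q w ≤ qdual Q v * qnorm Q w := by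
          nlinarith [le_trans h1 h2]
        exact le_of_mul_le_mul_right h4 hqpos
      calc qnorm Q w = μ⁻¹ * (μ * qnorm Q w) := by field_simp
        _ ≤ μ⁻¹ * qdual Q v := mul_le_mul_of_nonneg_left h3 (inv_nonneg.2 hμ.le)
  -- pointwise bound on `P`-side integrand
  have hsplit : ∀ z, h z = f' xstar z + ((f' xt z - F' xt) - (f' xstar z - F' xstar)) := by
    intro z
    rw [hFstar]
    simp only [hh]
    abel
  have hptb : ∀ z, qnorm Q (A⁻¹.mulVec (h z)) ^ 2
      ≤ 2 * qnorm Q (A⁻¹.mulVec (f' xstar z)) ^ 2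
        + (2 * μ⁻¹ ^ 2) * qdual Q ((f' xt z - F' xt) - (f' xstar z - F' xstar)) ^ 2 := by
    intro z
    have htri : qnorm Q (A⁻¹.mulVec (h z))
        ≤ qnorm Q (A⁻¹.mulVec (f' xstar z))
          + μ⁻¹ * qdual Q ((f' xt z - F' xt) - (f' xstar z - F' xstar)) := by
      rw [hsplit z, Matrix.mulVec_add]
      exact le_trans (VRAux.qnorm_add_le hQ _ _) (add_le_add_right (keyA _) _)
    have hb : 0 ≤ μ⁻¹ * qdual Q ((f' xt z - F' xt) - (f' xstar z - F' xstar)) :=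
      mul_nonneg (inv_nonneg.2 hμ.le)
        (VRAux.qdual_nonneg hQ ((f' xt z - F' xt) - (f' xstar z - F' xstar)))
    have hmain := VRAux.sq_add_le htri (VRAux.qnorm_nonneg _) (VRAux.qnorm_nonneg _) hb
    nlinarith [hmain]
  obtain ⟨C, hC0, hC⟩ := VRAux.opBound hQ A⁻¹
  have hIstar : Integrable (fun z => qnorm Q (A⁻¹.mulVec (f' xstar z)) ^ 2) P := by
    refine Integrable.mono' (g := fun z => C ^ 2 * qnorm Q (f' xstar z) ^ 2)
      ((hmom xstar).const_mul _)
      ((((VRAux.continuous_qnorm Q).comp (VRAux.continuous_mulVec A⁻¹)).pow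
        2).comp_aestronglyMeasurable (hfmeas xstar)) ?_
    refine Filter.Eventually.of_forall fun z => ?_
    rw [Real.norm_eq_abs, abs_of_nonneg (sq_nonneg _)]
    have hb := hC (f' xstar z)
    nlinarith [mul_le_mul hb hb (VRAux.qnorm_nonneg _)
      (mul_nonneg hC0 (VRAux.qnorm_nonneg _))]
  have hIh : (∫ z, qnorm Q (A⁻¹.mulVec (h z)) ^ 2 ∂P)
      ≤ 2 * (∫ z, qnorm Q (A⁻¹.mulVec (f' xstar z)) ^ 2 ∂P)
        + (2 * μ⁻¹ ^ 2) * (ζ ^ 2 * qnorm Q (xt - xstar) ^ 2) := by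
    have hrhs_int : Integrable (fun z => 2 * qnorm Q (A⁻¹.mulVec (f' xstar z)) ^ 2
        + (2 * μ⁻¹ ^ 2)
          * qdual Q ((f' xt z - F' xt) - (f' xstar z - F' xstar)) ^ 2) P :=
      (hIstar.const_mul 2).add ((hBint xt xstar).const_mul _)
    calc (∫ z, qnorm Q (A⁻¹.mulVec (h z)) ^ 2 ∂P)
        ≤ ∫ z, (2 * qnorm Q (A⁻¹.mulVec (f' xstar z)) ^ 2
            + (2 * μ⁻¹ ^ 2)
              * qdual Q ((f' xt z - F' xt) - (f' xstar z - F' xstar)) ^ 2) ∂P :=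
          integral_mono hPhiH_int hrhs_int hptb
      _ = 2 * (∫ z, qnorm Q (A⁻¹.mulVec (f' xstar z)) ^ 2 ∂P)
            + (2 * μ⁻¹ ^ 2)
              * ∫ z, qdual Q ((f' xt z - F' xt) - (f' xstar z - F' xstar)) ^ 2 ∂P := by
          rw [integral_add (hIstar.const_mul 2) ((hBint xt xstar).const_mul _),
            integral_const_mul, integral_const_mul]
      _ ≤ 2 * (∫ z, qnorm Q (A⁻¹.mulVec (f' xstar z)) ^ 2 ∂P)
            + (2 * μ⁻¹ ^ 2) * (ζ ^ 2 * qnorm Q (xt - xstar) ^ 2) := by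
          have := hB xt xstar
          have h2 : (0:ℝ) ≤ 2 * μ⁻¹ ^ 2 := by positivity
          exact add_le_add_right (mul_le_mul_of_nonneg_left this h2) _
  -- put everything together
  rw [← MeasureTheory.ofReal_integral_eq_lintegral_ofReal hIntegrand
    (Filter.Eventually.of_forall fun ω => sq_nonneg _)]
  refine ENNReal.ofReal_le_ofReal ?_
  rw [hIval, hPhiVal]
  calc (N : ℝ)⁻¹ * ∫ z, qnorm Q (A⁻¹.mulVec (h z)) ^ 2 ∂P
      ≤ (N : ℝ)⁻¹ * (2 * (∫ z, qnorm Q (A⁻¹.mulVec (f' xstar z)) ^ 2 ∂P)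
          + (2 * μ⁻¹ ^ 2) * (ζ ^ 2 * qnorm Q (xt - xstar) ^ 2)) :=
        mul_le_mul_of_nonneg_left hIh (by positivity)
    _ = (2 / N) * (∫ z, (qnorm Q (A⁻¹.mulVec (f' xstar z))) ^ 2 ∂P)
          + (2 * ζ ^ 2 / (N * μ ^ 2)) * (qnorm Q (xt - xstar)) ^ 2 := by
        field_simp

end
end

section
/- Let (Ω, 𝔽, ℙ) be a probability space, let x⋆ ∈ ℝ^d, let x̂_0 ∈ ℝ^d be deterministic, and let x̂_1, …, x̂_K : Ω → ℝ^d be random vectors with E[‖x̂_k − x⋆‖²] < ∞ for all k, where ‖·‖ is a norm on ℝ^d. Let C₁, C₂ ≥ 0 and suppose that for every 1 ≤ k ≤ K, whenever N_k ≥ C₁ one has E[‖x̂_k − x⋆‖²] ≤ (1/2)·E[‖x̂_{k−1} − x⋆‖²] + C₂/N_k. Let N ≥ 1 and suppose the positive reals N_1, …, N_K satisfy N_k ≥ max{C₁, (3/4)^{K+1−k}·N} for every k. Then E[‖x̂_K − x⋆‖²] ≤ 2^{−K}·‖x̂_0 − x⋆‖² + 4C₂/N. -/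
/-!
Writing `a k = E‖x̂_k − x⋆‖²`, the hypotheses give the scalar recursion
`a (k+1) ≤ a k / 2 + (C₂/N) (4/3)^(K−k)`, since `N_{k+1} ≥ (3/4)^(K−k) N`. The noise terms grow
geometrically with ratio `4/3`, and since `(1/2)(4/3) < 1` the contraction outpaces them:
`a k ≤ 2^(−k) a 0 + 4 (C₂/N) (4/3)^(K−k)` is preserved by the recursion; at `k = K` this is the
claim.
-/

open MeasureTheory ProbabilityTheory

/-- The constant `c q / (1 - ρ q)` is the fixed point `M` of `M = ρ M q + c q`, which is what makes
the bound invariant under one step of the recursion. -/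
theorem le_pow_mul_add_of_succ_le_mul_add {a : ℕ → ℝ} {ρ q c : ℝ} {K : ℕ}
    (hρ : 0 ≤ ρ) (hq : 0 ≤ q) (hρq : ρ * q < 1) (hc : 0 ≤ c)
    (h : ∀ k < K, a (k + 1) ≤ ρ * a k + c * q ^ (K - k)) :
    ∀ k ≤ K, a k ≤ ρ ^ k * a 0 + c * q / (1 - ρ * q) * q ^ (K - k) := by
  set M := c * q / (1 - ρ * q) with hM
  have hgap : 0 < 1 - ρ * q := by linarith
  have hfix : ρ * M * q + c * q = M := by
    rw [hM]; field_simp; ring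
  intro k
  induction k with
  | zero =>
    intro _
    have : 0 ≤ M * q ^ K := by positivity
    simpa using this
  | succ k ih =>
    intro hk
    obtain ⟨m, hm⟩ : ∃ m, K - k = m + 1 := ⟨K - (k + 1), by omega⟩
    have hm' : K - (k + 1) = m := by omega
    have hak := ih (by omega)
    rw [hm] at hak
    calc a (k + 1) ≤ ρ * a k + c * q ^ (m + 1) := hm ▸ h k (by omega)
      _ ≤ ρ * (ρ ^ k * a 0 + M * q ^ (m + 1)) + c * q ^ (m + 1) := by gcongr
      _ = ρ ^ (k + 1) * a 0 + (ρ * M * q + c * q) * q ^ m := by ring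
      _ = ρ ^ (k + 1) * a 0 + M * q ^ (K - (k + 1)) := by rw [hfix, hm']

theorem div_le_div_mul_pow_of_inv_pow_mul_le {C N M q : ℝ} (m : ℕ)
    (hC : 0 ≤ C) (hN : 0 < N) (hq : 0 < q) (hM : q⁻¹ ^ m * N ≤ M) :
    C / M ≤ C / N * q ^ m := by
  calc C / M ≤ C / (q⁻¹ ^ m * N) := div_le_div_of_nonneg_left hC (by positivity) hM
    _ = C / N * q ^ m := by rw [inv_pow]; field_simp

theorem statement4_general
    {d : ℕ}
    -- an arbitrary norm `nrm` on ℝ^d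
    (nrm : (Fin d → ℝ) → ℝ)
    -- the underlying probability space and the random vectors
    {Ω : Type*} [MeasureSpace Ω] [IsProbabilityMeasure (ℙ : Measure Ω)]
    (K : ℕ)
    (xstar : Fin d → ℝ) (x0 : Fin d → ℝ)
    (xhat : ℕ → Ω → Fin d → ℝ)
    (hxhat0 : ∀ om, xhat 0 om = x0)
    (C₁ C₂ : ℝ) (hC₂ : 0 ≤ C₂)
    (Nk : ℕ → ℝ)
    -- the contraction hypothesis: for each `1 ≤ k ≤ K`, whenever `N_k ≥ C₁`,
    -- `E‖x̂_k − x⋆‖² ≤ ½ E‖x̂_{k−1} − x⋆‖² + C₂/N_k`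
    (hcontract : ∀ k, 1 ≤ k → k ≤ K → C₁ ≤ Nk k →
      ∫ om : Ω, (nrm (xhat k om - xstar)) ^ 2 ∂(ℙ : Measure Ω)
        ≤ (1 / 2) * ∫ om : Ω, (nrm (xhat (k - 1) om - xstar)) ^ 2 ∂(ℙ : Measure Ω) + C₂ / Nk k)
    (N : ℝ) (hN : 1 ≤ N)
    (hNk : ∀ k, 1 ≤ k → k ≤ K → max C₁ ((3 / 4 : ℝ) ^ (K + 1 - k) * N) ≤ Nk k) :
    ∫ om : Ω, (nrm (xhat K om - xstar)) ^ 2 ∂(ℙ : Measure Ω)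
      ≤ (1 / 2 : ℝ) ^ K * (nrm (x0 - xstar)) ^ 2 + 4 * C₂ / N := by
  set a : ℕ → ℝ := fun k => ∫ om : Ω, (nrm (xhat k om - xstar)) ^ 2 ∂(ℙ : Measure Ω)
  have hN0 : 0 < N := by linarith
  have ha0 : a 0 = nrm (x0 - xstar) ^ 2 := by simp [a, hxhat0]
  have hstep : ∀ k < K, a (k + 1) ≤ 1 / 2 * a k + C₂ / N * (4 / 3) ^ (K - k) := by
    intro k hk
    obtain ⟨hC₁k, hNkk⟩ := max_le_iff.mp (hNk (k + 1) (by omega) hk)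
    rw [show K + 1 - (k + 1) = K - k by omega, show (3 / 4 : ℝ) = (4 / 3)⁻¹ by norm_num] at hNkk
    calc a (k + 1) ≤ 1 / 2 * a k + C₂ / Nk (k + 1) := hcontract (k + 1) (by omega) hk hC₁k
      _ ≤ 1 / 2 * a k + C₂ / N * (4 / 3) ^ (K - k) := by
        gcongr
        exact div_le_div_mul_pow_of_inv_pow_mul_le _ hC₂ hN0 (by norm_num) hNkk
  have hK := le_pow_mul_add_of_succ_le_mul_add (by norm_num) (by norm_num) (by norm_num)
    (div_nonneg hC₂ hN0.le) hstep K le_rfl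
  rw [ha0] at hK
  convert hK using 2
  norm_num
  ring

/-- meta convergence of the variance-reduction outer loop,
Proposition `meta_convergence`. -/
theorem statement4
    {d : ℕ} (hd : 1 ≤ d)
    -- an arbitrary norm `nrm` on ℝ^d
    (nrm : (Fin d → ℝ) → ℝ)
    (hnrm_tri : ∀ x y, nrm (x + y) ≤ nrm x + nrm y)
    (hnrm_smul : ∀ (c : ℝ) x, nrm (c • x) = |c| * nrm x)
    (hnrm_def : ∀ x, nrm x = 0 → x = 0)
    -- the underlying probability space and the random vectors
    {Ω : Type*} [MeasureSpace Ω] [IsProbabilityMeasure (ℙ : Measure Ω)]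
    (K : ℕ) (hK : 1 ≤ K)
    (xstar : Fin d → ℝ) (x0 : Fin d → ℝ)
    (xhat : ℕ → Ω → Fin d → ℝ)
    (hxhat0 : ∀ om, xhat 0 om = x0)
    (hint : ∀ k, k ≤ K → Integrable (fun om => (nrm (xhat k om - xstar)) ^ 2) ℙ)
    (C₁ C₂ : ℝ) (hC₁ : 0 ≤ C₁) (hC₂ : 0 ≤ C₂)
    (Nk : ℕ → ℝ) (hNkpos : ∀ k, 1 ≤ k → k ≤ K → 0 < Nk k)
    -- the contraction hypothesis: for each `1 ≤ k ≤ K`, whenever `N_k ≥ C₁`,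
    -- `E‖x̂_k − x⋆‖² ≤ ½ E‖x̂_{k−1} − x⋆‖² + C₂/N_k`
    (hcontract : ∀ k, 1 ≤ k → k ≤ K → C₁ ≤ Nk k →
      ∫ om : Ω, (nrm (xhat k om - xstar)) ^ 2 ∂(ℙ : Measure Ω)
        ≤ (1 / 2) * ∫ om : Ω, (nrm (xhat (k - 1) om - xstar)) ^ 2 ∂(ℙ : Measure Ω) + C₂ / Nk k)
    (N : ℝ) (hN : 1 ≤ N)
    (hNk : ∀ k, 1 ≤ k → k ≤ K → max C₁ ((3 / 4 : ℝ) ^ (K + 1 - k) * N) ≤ Nk k) :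
    ∫ om : Ω, (nrm (xhat K om - xstar)) ^ 2 ∂(ℙ : Measure Ω)
      ≤ (1 / 2 : ℝ) ^ K * (nrm (x0 - xstar)) ^ 2 + 4 * C₂ / N :=
  statement4_general nrm K xstar x0 xhat hxhat0 C₁ C₂ hC₂ Nk hcontract N hN hNk
end

section
/- Let n be a positive integer, and let Ā and b̄ be independent real Gaussian random variables with Ā ∼ N(1, 1/n) and b̄ ∼ N(−1, 1/n). Then E[((b̄ + Ā)/Ā)²] = +∞; that is, the Lebesgue integral ∫∫ ((x + y)/(1 + x))² · (n/(2π)) · exp(−(n/2)(x² + y²)) dx dy over ℝ² equals +∞. (Consequently, the critical point of the sample average objective in one-dimensional quadratic stochastic optimization with these Gaussian data has infinite mean squared error.) -/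
open MeasureTheory ProbabilityTheory Real Set
open scoped NNReal ENNReal

noncomputable section


lemma aux1 (K t : ℝ) (hK : 0 < K) (ht : 0 < t) :
    ∫⁻ x in Ioo (0:ℝ) t, ENNReal.ofReal (K * (x ^ 2)⁻¹) = ⊤ := by
  by_contra h
  have hmeas : AEStronglyMeasurable (fun x : ℝ => K * (x ^ 2)⁻¹)
      (volume.restrict (Ioo (0:ℝ) t)) :=
    (measurable_const.mul ((measurable_id.pow_const 2).inv)).aestronglyMeasurable
  have hpos : 0 ≤ᵐ[volume.restrict (Ioo (0:ℝ) t)] fun x : ℝ => K * (x ^ 2)⁻¹ :=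
    Filter.Eventually.of_forall fun x => by positivity
  have hint : IntegrableOn (fun x : ℝ => K * (x ^ 2)⁻¹) (Ioo (0:ℝ) t) volume :=
    (lintegral_ofReal_ne_top_iff_integrable hmeas hpos).mp h
  have hint2 : IntegrableOn (fun x : ℝ => (x ^ 2)⁻¹) (Ioo (0:ℝ) t) volume := by
    have h2 := hint.const_mul K⁻¹
    have heq : (fun x : ℝ => K⁻¹ * (K * (x ^ 2)⁻¹)) = fun x : ℝ => (x ^ 2)⁻¹ := by
      funext x; field_simp
    rwa [heq] at h2
  have hint3 : IntegrableOn (fun x : ℝ => x ^ (-2 : ℝ)) (Ioo (0:ℝ) t) volume := by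
    refine hint2.congr_fun (fun x hx => ?_) measurableSet_Ioo
    rw [rpow_neg hx.1.le, rpow_two]
  rw [intervalIntegral.integrableOn_Ioo_rpow_iff ht] at hint3
  norm_num at hint3

lemma aux2 (K a b : ℝ) (hK : 0 < K) (hab : a < b) :
    ∫⁻ x in Ioo a b, ENNReal.ofReal (K * ((x - a) ^ 2)⁻¹) = ⊤ := by
  have h1 : ∫⁻ x in Ioo a b, ENNReal.ofReal (K * ((x - a) ^ 2)⁻¹)
      = ∫⁻ x, (Ioo (0:ℝ) (b - a)).indicator
          (fun y => ENNReal.ofReal (K * (y ^ 2)⁻¹)) (x + -a) := by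
    rw [← lintegral_indicator measurableSet_Ioo]
    congr 1
    funext x
    by_cases hx : x ∈ Ioo a b
    · rw [indicator_of_mem hx, indicator_of_mem (by simp at hx ⊢; constructor <;> linarith [hx.1, hx.2])]
      ring_nf
    · rw [indicator_of_notMem hx, indicator_of_notMem (by simp at hx ⊢; intro h; linarith [hx h])]
  rw [h1, lintegral_add_right_eq_self, lintegral_indicator measurableSet_Ioo]
  exact aux1 K (b - a) hK (by linarith)

lemma part2 (n : ℕ) (hn : 0 < n) :
    ∫⁻ q : ℝ × ℝ, ENNReal.ofReal
          (((q.1 + q.2) / (1 + q.1)) ^ 2 * ((n : ℝ) / (2 * π))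
            * Real.exp (-((n : ℝ) / 2) * (q.1 ^ 2 + q.2 ^ 2))) = ⊤ := by
  have hnR : (0:ℝ) < n := Nat.cast_pos.mpr hn
  set c : ℝ := ((n:ℝ)/(2*π)) * rexp (-(5*(n:ℝ))) with hc_def
  have hc : 0 < c := by positivity
  set F : ℝ → ℝ≥0∞ := (Ioo (-1:ℝ) (-1/2)).indicator
      (fun x => ENNReal.ofReal (c * ((x - (-1)) ^ 2)⁻¹)) with hF_def
  set G : ℝ → ℝ≥0∞ := (Ioo (2:ℝ) 3).indicator 1 with hG_def
  have hFmeas : Measurable F :=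
    (Measurable.indicator (by fun_prop) measurableSet_Ioo)
  have hGmeas : Measurable G := measurable_const.indicator measurableSet_Ioo
  have hmono : ∀ q : ℝ × ℝ, F q.1 * G q.2 ≤ ENNReal.ofReal
          (((q.1 + q.2) / (1 + q.1)) ^ 2 * ((n : ℝ) / (2 * π))
            * Real.exp (-((n : ℝ) / 2) * (q.1 ^ 2 + q.2 ^ 2))) := by
    rintro ⟨x, y⟩
    by_cases hx : x ∈ Ioo (-1:ℝ) (-1/2)
    · by_cases hy : y ∈ Ioo (2:ℝ) 3
      · simp only [hF_def, hG_def, indicator_of_mem hx, indicator_of_mem hy, Pi.one_apply,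
          mul_one]
        apply ENNReal.ofReal_le_ofReal
        obtain ⟨hx1, hx2⟩ := hx
        obtain ⟨hy1, hy2⟩ := hy
        have h1p : (0:ℝ) < 1 + x := by linarith
        have hsq : (1:ℝ) ≤ (x + y) ^ 2 := by nlinarith
        have hA : ((1 + x) ^ 2)⁻¹ ≤ ((x + y) / (1 + x)) ^ 2 := by
          rw [div_pow, inv_eq_one_div]
          gcongr
        have hC : rexp (-(5*(n:ℝ))) ≤ rexp (-((n:ℝ)/2) * (x^2 + y^2)) := by
          apply exp_le_exp.mpr
          have hxx : x ^ 2 ≤ 1 := by nlinarith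
          have hyy : y ^ 2 ≤ 9 := by nlinarith
          nlinarith
        calc c * ((x - (-1)) ^ 2)⁻¹
            = ((1 + x) ^ 2)⁻¹ * ((n:ℝ)/(2*π)) * rexp (-(5*(n:ℝ))) := by
              rw [hc_def]; ring_nf
          _ ≤ ((x + y) / (1 + x)) ^ 2 * ((n : ℝ) / (2 * π))
              * rexp (-((n : ℝ) / 2) * (x ^ 2 + y ^ 2)) := by
              gcongr
      · simp [hG_def, indicator_of_notMem hy]
    · simp [hF_def, indicator_of_notMem hx]
  refine top_le_iff.mp ?_
  calc (⊤:ℝ≥0∞) = (∫⁻ x, F x) * (∫⁻ y, G y) := by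
        have hF : (∫⁻ x, F x) = ⊤ := by
          rw [hF_def, lintegral_indicator measurableSet_Ioo]
          exact aux2 c (-1) (-1/2) hc (by norm_num)
        have hG : (∫⁻ y, G y) = 1 := by
          rw [hG_def, lintegral_indicator measurableSet_Ioo]
          simp [Real.volume_Ioo]
          norm_num
        rw [hF, hG, mul_one]
    _ = ∫⁻ q : ℝ × ℝ, F q.1 * G q.2 := by
        rw [Measure.volume_eq_prod, lintegral_prod_mul hFmeas.aemeasurable hGmeas.aemeasurable]
    _ ≤ _ := lintegral_mono hmono

lemma part1 (n : ℕ) (hn : 0 < n) :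
    ∫⁻ p : ℝ × ℝ, ENNReal.ofReal (((p.2 + p.1) / p.1) ^ 2)
        ∂((gaussianReal 1 ((n : ℝ≥0))⁻¹).prod (gaussianReal (-1) ((n : ℝ≥0))⁻¹)) = ⊤ := by
  set v : ℝ≥0 := ((n : ℝ≥0))⁻¹ with hv_def
  have hv : v ≠ 0 := inv_ne_zero (Nat.cast_ne_zero.mpr hn.ne')
  have hvR : (0:ℝ) < (v:ℝ) := NNReal.coe_pos.mpr (pos_iff_ne_zero.mpr hv)
  set μm := gaussianReal 1 v with hμm
  set νm := gaussianReal (-1) v with hνm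
  set F : ℝ → ℝ≥0∞ := (Ioo (0:ℝ) (1/2)).indicator (fun x => ENNReal.ofReal ((x ^ 2)⁻¹))
    with hF_def
  set G : ℝ → ℝ≥0∞ := (Ioo (-3:ℝ) (-2)).indicator 1 with hG_def
  have hFmeas : Measurable F := Measurable.indicator (by fun_prop) measurableSet_Ioo
  have hGmeas : Measurable G := measurable_const.indicator measurableSet_Ioo
  have hmono : ∀ p : ℝ × ℝ, F p.1 * G p.2 ≤ ENNReal.ofReal (((p.2 + p.1) / p.1) ^ 2) := by
    rintro ⟨x, y⟩
    by_cases hy : y ∈ Ioo (-3:ℝ) (-2)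
    · by_cases hx : x ∈ Ioo (0:ℝ) (1/2)
      · simp only [hF_def, hG_def, indicator_of_mem hx, indicator_of_mem hy, Pi.one_apply,
          mul_one]
        apply ENNReal.ofReal_le_ofReal
        obtain ⟨hx1, hx2⟩ := hx
        obtain ⟨hy1, hy2⟩ := hy
        have hsq : (1:ℝ) ≤ (y + x) ^ 2 := by nlinarith
        rw [div_pow, inv_eq_one_div]
        gcongr
      · simp only [hF_def, indicator_of_notMem hx, zero_mul]
        exact zero_le
    · simp only [hG_def, indicator_of_notMem hy, mul_zero]
      exact zero_le
  -- ∫ F dμm = ⊤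
  have hF_top : (∫⁻ x, F x ∂μm) = ⊤ := by
    set δ : ℝ := (√(2 * π * (v:ℝ)))⁻¹ * rexp (-(1 / (2 * (v:ℝ)))) with hδ_def
    have hδ : 0 < δ := by positivity
    rw [hμm, gaussianReal_of_var_ne_zero 1 hv,
      lintegral_withDensity_eq_lintegral_mul volume (measurable_gaussianPDF 1 v) hFmeas]
    refine top_le_iff.mp ?_
    calc (⊤:ℝ≥0∞) = ∫⁻ x in Ioo (0:ℝ) (1/2), ENNReal.ofReal (δ * (x ^ 2)⁻¹) :=
          (aux1 δ (1/2) hδ (by norm_num)).symm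
      _ = ∫⁻ x, (Ioo (0:ℝ) (1/2)).indicator
            (fun x => ENNReal.ofReal (δ * (x ^ 2)⁻¹)) x :=
          (lintegral_indicator measurableSet_Ioo _).symm
      _ ≤ ∫⁻ x, (gaussianPDF 1 v * F) x := by
          apply lintegral_mono
          intro x
          by_cases hx : x ∈ Ioo (0:ℝ) (1/2)
          · rw [indicator_of_mem hx]
            simp only [Pi.mul_apply, hF_def, indicator_of_mem hx]
            rw [ENNReal.ofReal_mul hδ.le]
            apply mul_le_mul_left
            rw [gaussianPDF_def]
            apply ENNReal.ofReal_le_ofReal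
            rw [gaussianPDFReal]
            obtain ⟨hx1, hx2⟩ := hx
            have harg : -(1 / (2 * (v:ℝ))) ≤ -(x - 1) ^ 2 / (2 * (v:ℝ)) := by
              rw [neg_div, neg_le_neg_iff]
              gcongr
              nlinarith
            exact mul_le_mul_of_nonneg_left (exp_le_exp.mpr harg) (by positivity)
          · rw [indicator_of_notMem hx]
            exact zero_le
  -- νm (Ioo (-3) (-2)) ≠ 0
  have hν0 : νm (Ioo (-3:ℝ) (-2)) ≠ 0 := by
    set δ₂ : ℝ := (√(2 * π * (v:ℝ)))⁻¹ * rexp (-(4 / (2 * (v:ℝ)))) with hδ₂_def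
    have hδ₂ : 0 < δ₂ := by positivity
    rw [hνm, gaussianReal_of_var_ne_zero _ hv, withDensity_apply _ measurableSet_Ioo]
    have hge : ∫⁻ y in Ioo (-3:ℝ) (-2), ENNReal.ofReal δ₂
        ≤ ∫⁻ y in Ioo (-3:ℝ) (-2), gaussianPDF (-1) v y := by
      apply setLIntegral_mono' measurableSet_Ioo
      intro y hy
      rw [gaussianPDF_def]
      apply ENNReal.ofReal_le_ofReal
      rw [gaussianPDFReal]
      obtain ⟨hy1, hy2⟩ := hy
      have harg : -(4 / (2 * (v:ℝ))) ≤ -(y - (-1)) ^ 2 / (2 * (v:ℝ)) := by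
        rw [neg_div, neg_le_neg_iff]
        gcongr
        nlinarith
      exact mul_le_mul_of_nonneg_left (exp_le_exp.mpr harg) (by positivity)
    intro h0
    rw [h0] at hge
    simp only [lintegral_const, Measure.restrict_apply, MeasurableSet.univ, univ_inter,
      Real.volume_Ioo, nonpos_iff_eq_zero, mul_eq_zero] at hge
    rcases hge with h | h <;> rw [ENNReal.ofReal_eq_zero] at h
    · linarith
    · norm_num at h
  have hν_top : νm (Ioo (-3:ℝ) (-2)) ≠ ⊤ := by
    exact (measure_lt_top νm _).ne
  refine top_le_iff.mp ?_
  calc (⊤:ℝ≥0∞) = (∫⁻ x, F x ∂μm) * (∫⁻ y, G y ∂νm) := by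
        have hG : (∫⁻ y, G y ∂νm) = νm (Ioo (-3:ℝ) (-2)) := by
          rw [hG_def, lintegral_indicator measurableSet_Ioo]
          simp only [Pi.one_apply]
          exact setLIntegral_one _
        rw [hF_top, hG, ENNReal.top_mul hν0]
    _ = ∫⁻ p : ℝ × ℝ, F p.1 * G p.2 ∂(μm.prod νm) :=
        (lintegral_prod_mul hFmeas.aemeasurable hGmeas.aemeasurable).symm
    _ ≤ _ := lintegral_mono hmono

/-- infinite mean squared error of the SAA critical point in
one-dimensional quadratic stochastic optimization with Gaussian data. -/
theorem statement8 (n : ℕ) (hn : 0 < n) :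
    -- `Ā ∼ N(1, 1/n)` and `b̄ ∼ N(−1, 1/n)` independent; `E[((b̄ + Ā)/Ā)²] = ∞`
    (∫⁻ p : ℝ × ℝ, ENNReal.ofReal (((p.2 + p.1) / p.1) ^ 2)
        ∂((gaussianReal 1 ((n : ℝ≥0))⁻¹).prod (gaussianReal (-1) ((n : ℝ≥0))⁻¹)) = ⊤)
    -- that is, the corresponding Lebesgue integral over ℝ² equals +∞
    ∧ (∫⁻ q : ℝ × ℝ, ENNReal.ofReal
          (((q.1 + q.2) / (1 + q.1)) ^ 2 * ((n : ℝ) / (2 * π))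
            * Real.exp (-((n : ℝ) / 2) * (q.1 ^ 2 + q.2 ^ 2))) = ⊤) :=
  ⟨part1 n hn, part2 n hn⟩

end
end

section
/- Let F : ℝ^d → ℝ be twice continuously differentiable, μ-strongly convex with respect to ‖·‖ with unique minimizer x⋆, and suppose its Hessian satisfies ‖∇²F(x⋆)⁻¹(∇²F(x) − ∇²F(x'))‖ ≤ L_H‖x − x'‖ for all x, x' ∈ ℝ^d (operator norms induced by ‖·‖), with L_H > 0. For x ∈ ℝ^d define B(x) := ∫₀¹ ∇²F(x⋆ + t(x − x⋆)) dt. Then for every x with ‖x − x⋆‖ ≤ 1/(2L_H), the matrix B(x) is invertible and ‖B(x)⁻¹·∇²F(x⋆)‖ ≤ 2. -/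
open MeasureTheory Matrix Real

noncomputable section

/-- Operator norm of a matrix induced by the norm `qnorm Q`. -/
def qOpNorm {d : ℕ} (Q : Matrix (Fin d) (Fin d) ℝ) (M : Matrix (Fin d) (Fin d) ℝ) : ℝ :=
  sSup {r : ℝ | ∃ v : Fin d → ℝ, qnorm Q v = 1 ∧ r = qnorm Q (M.mulVec v)}

/-- The continuous linear map `v ↦ M v`. -/
def mulVecCLM {d : ℕ} (M : Matrix (Fin d) (Fin d) ℝ) : (Fin d → ℝ) →L[ℝ] (Fin d → ℝ) :=
  LinearMap.toContinuousLinearMap M.mulVecLin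


/-! ### Auxiliary material -/

/-- Identification of `Fin d → ℝ` with Euclidean space. -/
def toE {d : ℕ} : (Fin d → ℝ) ≃ EuclideanSpace ℝ (Fin d) := (WithLp.equiv 2 (Fin d → ℝ)).symm

lemma qnorm_eq {d : ℕ} (S : Matrix (Fin d) (Fin d) ℝ) (hS : Sᵀ = S) (y : Fin d → ℝ) :
    qnorm (S * S) y = ‖toE (S.mulVec y)‖ := by
  rw [qnorm, EuclideanSpace.norm_eq]
  congr 1
  have : y ⬝ᵥ (S * S).mulVec y = (S.mulVec y) ⬝ᵥ (S.mulVec y) := by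
    rw [← Matrix.mulVec_mulVec, Matrix.dotProduct_mulVec, ← Matrix.mulVec_transpose, hS]
  rw [this, dotProduct]
  congr 1; ext i
  simp [toE, Real.norm_eq_abs, sq_abs, pow_two]

lemma qnorm_nonneg' {d : ℕ} (Q : Matrix (Fin d) (Fin d) ℝ) (v : Fin d → ℝ) : 0 ≤ qnorm Q v :=
  Real.sqrt_nonneg _

lemma qnorm_pos {d : ℕ} {Q : Matrix (Fin d) (Fin d) ℝ} (hQ : Q.PosDef) {v : Fin d → ℝ}
    (hv : v ≠ 0) : 0 < qnorm Q v := by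
  have := hQ.dotProduct_mulVec_pos hv
  simp only [star_trivial] at this
  exact Real.sqrt_pos.mpr this

lemma qnorm_smul {d : ℕ} (S : Matrix (Fin d) (Fin d) ℝ) (hS : Sᵀ = S) (c : ℝ) (v : Fin d → ℝ) :
    qnorm (S * S) (c • v) = |c| * qnorm (S * S) v := by
  rw [qnorm_eq S hS, qnorm_eq S hS]
  have h1 : toE (S.mulVec (c • v)) = c • toE (S.mulVec v) := by
    ext i; simp [toE, Matrix.mulVec_smul]
  rw [h1, norm_smul, Real.norm_eq_abs]

lemma phi_apply {d : ℕ} (N : Matrix (Fin d) (Fin d) ℝ) (z : Fin d → ℝ) :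
    Matrix.toEuclideanCLM (𝕜 := ℝ) N (toE z) = toE (N.mulVec z) := by
  simp [toE, Matrix.toLin'_apply]

lemma qOpNorm_eq {d : ℕ} (hd : 1 ≤ d) (S : Matrix (Fin d) (Fin d) ℝ) (hS : Sᵀ = S)
    (hQ : (S * S).PosDef) (hSdet : IsUnit S.det) (M : Matrix (Fin d) (Fin d) ℝ) :
    qOpNorm (S * S) M = ‖Matrix.toEuclideanCLM (𝕜 := ℝ) (S * M * S⁻¹)‖ := by
  set f := Matrix.toEuclideanCLM (𝕜 := ℝ) (S * M * S⁻¹) with hf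
  have hSS : S⁻¹ * S = 1 := Matrix.nonsing_inv_mul S hSdet
  have key : ∀ v : Fin d → ℝ, f (toE (S.mulVec v)) = toE (S.mulVec (M.mulVec v)) := by
    intro v
    rw [hf, phi_apply]
    congr 1
    rw [Matrix.mulVec_mulVec, Matrix.mulVec_mulVec, mul_assoc, hSS, mul_one]
  have hub : ∀ r ∈ {r : ℝ | ∃ v : Fin d → ℝ, qnorm (S*S) v = 1 ∧ r = qnorm (S*S) (M.mulVec v)},
      r ≤ ‖f‖ := by
    rintro r ⟨v, hv1, rfl⟩
    rw [qnorm_eq S hS, ← key]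
    calc ‖f (toE (S.mulVec v))‖ ≤ ‖f‖ * ‖toE (S.mulVec v)‖ := f.le_opNorm _
      _ = ‖f‖ := by rw [← qnorm_eq S hS, hv1, mul_one]
  -- a unit vector exists
  obtain ⟨u₀, hu₀⟩ : ∃ u : Fin d → ℝ, qnorm (S*S) u = 1 := by
    have hv0 : (Pi.single (⟨0, hd⟩ : Fin d) (1:ℝ) : Fin d → ℝ) ≠ 0 := by
      intro h
      have := congrFun h ⟨0, hd⟩
      simp at this
    set v₀ : Fin d → ℝ := Pi.single (⟨0, hd⟩ : Fin d) (1:ℝ)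
    have hn : 0 < qnorm (S*S) v₀ := qnorm_pos hQ hv0
    refine ⟨(qnorm (S*S) v₀)⁻¹ • v₀, ?_⟩
    rw [qnorm_smul S hS, abs_of_pos (by positivity), inv_mul_cancel₀ hn.ne']
  have hne : {r : ℝ | ∃ v : Fin d → ℝ, qnorm (S*S) v = 1 ∧ r = qnorm (S*S) (M.mulVec v)}.Nonempty :=
    ⟨_, u₀, hu₀, rfl⟩
  have hbdd : BddAbove {r : ℝ | ∃ v : Fin d → ℝ, qnorm (S*S) v = 1 ∧ r = qnorm (S*S) (M.mulVec v)} :=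
    ⟨‖f‖, hub⟩
  have hOpNonneg : 0 ≤ qOpNorm (S*S) M := by
    have := le_csSup hbdd (⟨u₀, hu₀, rfl⟩ :
      qnorm (S*S) (M.mulVec u₀) ∈ {r : ℝ | ∃ v, qnorm (S*S) v = 1 ∧ r = qnorm (S*S) (M.mulVec v)})
    exact le_trans (qnorm_nonneg' _ _) this
  refine le_antisymm (Real.sSup_le hub (norm_nonneg f)) ?_
  refine f.opNorm_le_bound hOpNonneg ?_
  intro w
  by_cases hw : w = 0
  · simp [hw]
  · set v := S⁻¹.mulVec (toE.symm w) with hv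
    have hSv : S.mulVec v = toE.symm w := by
      rw [hv, Matrix.mulVec_mulVec, Matrix.mul_nonsing_inv S hSdet, Matrix.one_mulVec]
    have hsvE : toE (S.mulVec v) = w := by rw [hSv]; exact toE.apply_symm_apply w
    have hqv : qnorm (S*S) v = ‖w‖ := by rw [qnorm_eq S hS, hsvE]
    have hqvpos : 0 < qnorm (S*S) v := by rw [hqv]; exact norm_pos_iff.mpr hw
    set u := (qnorm (S*S) v)⁻¹ • v with hu
    have hqu : qnorm (S*S) u = 1 := by
      rw [hu, qnorm_smul S hS, abs_of_pos (by positivity), inv_mul_cancel₀ hqvpos.ne']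
    have hvu : v = (qnorm (S*S) v) • u := by
      rw [hu, smul_smul, mul_inv_cancel₀ hqvpos.ne', one_smul]
    have hmem : qnorm (S*S) (M.mulVec u) ≤ qOpNorm (S*S) M := le_csSup hbdd ⟨u, hqu, rfl⟩
    calc ‖f w‖ = ‖f (toE (S.mulVec v))‖ := by rw [hsvE]
      _ = qnorm (S*S) (M.mulVec v) := by rw [key, ← qnorm_eq S hS]
      _ = qnorm (S*S) v * qnorm (S*S) (M.mulVec u) := by
          rw [hvu, Matrix.mulVec_smul, qnorm_smul S hS, abs_of_pos hqvpos,
            ← hvu]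
      _ ≤ ‖w‖ * qOpNorm (S*S) M := by
          rw [hqv]; exact mul_le_mul_of_nonneg_left hmem (norm_nonneg w)
      _ = qOpNorm (S*S) M * ‖w‖ := mul_comm _ _

lemma hessian_isUnit {d : ℕ} (Q : Matrix (Fin d) (Fin d) ℝ) (hQ : Q.PosDef)
    (F : (Fin d → ℝ) → ℝ) (F' : (Fin d → ℝ) → Fin d → ℝ)
    (F'' : (Fin d → ℝ) → Matrix (Fin d) (Fin d) ℝ)
    (hFdiff2 : ∀ y, HasFDerivAt F' (mulVecCLM (F'' y)) y)
    (μ : ℝ) (hμ : 0 < μ)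
    (hsc : ∀ x y, μ / 2 * (qnorm Q (y - x)) ^ 2 ≤ F y - F x - (F' x) ⬝ᵥ (y - x))
    (xstar : Fin d → ℝ) : IsUnit (F'' xstar) := by
  rw [Matrix.isUnit_iff_isUnit_det, isUnit_iff_ne_zero]
  intro hdet
  obtain ⟨v, hv0, hv⟩ := (Matrix.exists_mulVec_eq_zero_iff).mpr hdet
  set φ : ℝ → ℝ := fun t => v ⬝ᵥ F' (xstar + t • v) with hφ
  have hline : HasDerivAt (fun t : ℝ => xstar + t • v) v 0 := by
    have h1 : HasDerivAt (fun t : ℝ => t • v) ((1:ℝ) • v) 0 := (hasDerivAt_id (0:ℝ)).smul_const v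
    simpa using h1.const_add xstar
  have hF'at : HasFDerivAt F' (mulVecCLM (F'' xstar)) (xstar + (0:ℝ) • v) := by
    simpa using hFdiff2 xstar
  have hcomp : HasDerivAt (fun t : ℝ => F' (xstar + t • v)) ((F'' xstar).mulVec v) 0 := by
    have := hF'at.comp_hasDerivAt 0 hline
    simpa [mulVecCLM, Function.comp_def] using this
  have hder : HasDerivAt φ (v ⬝ᵥ (F'' xstar).mulVec v) 0 := by
    have := (dotCLM v).hasFDerivAt.comp_hasDerivAt 0 hcomp
    simpa [dotCLM, hφ, Function.comp_def] using this
  have hN : 0 < v ⬝ᵥ Q.mulVec v := by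
    have := hQ.dotProduct_mulVec_pos hv0; simpa using this
  have hqsq : ∀ t : ℝ, qnorm Q (t • v) ^ 2 = t ^ 2 * (v ⬝ᵥ Q.mulVec v) := by
    intro t
    have hnn : 0 ≤ (t • v) ⬝ᵥ Q.mulVec (t • v) := by
      have := hQ.posSemidef.dotProduct_mulVec_nonneg (t • v); simpa using this
    rw [qnorm, Real.sq_sqrt hnn, Matrix.mulVec_smul, dotProduct_smul,
      smul_dotProduct]
    ring_nf
  have hslope : ∀ t : ℝ, t ≠ 0 → μ * (v ⬝ᵥ Q.mulVec v) ≤ slope φ 0 t := by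
    intro t ht
    have h1 := hsc xstar (xstar + t • v)
    have h2 := hsc (xstar + t • v) xstar
    have e1 : xstar + t • v - xstar = t • v := by abel
    have e2 : xstar - (xstar + t • v) = -(t • v) := by abel
    rw [e1] at h1
    rw [e2] at h2
    have hqneg : qnorm Q (-(t • v)) = qnorm Q (t • v) := by
      rw [qnorm, qnorm]
      congr 1
      simp [Matrix.mulVec_neg, dotProduct_neg]
    rw [hqneg] at h2
    have hsum : μ * qnorm Q (t • v) ^ 2 ≤
        F' (xstar + t • v) ⬝ᵥ (t • v) - F' xstar ⬝ᵥ (t • v) := by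
      have := add_le_add h1 h2
      simp only [dotProduct_neg] at this
      nlinarith [this]
    rw [hqsq t] at hsum
    have hdot : ∀ w : Fin d → ℝ, w ⬝ᵥ (t • v) = t * (v ⬝ᵥ w) := by
      intro w
      rw [dotProduct_smul, smul_eq_mul, dotProduct_comm]
    rw [hdot, hdot] at hsum
    have hphi : φ t - φ 0 = F' (xstar + t • v) ⬝ᵥ v - F' xstar ⬝ᵥ v := by
      simp [hφ, dotProduct_comm v]
    have hsum2 : μ * (t ^ 2 * (v ⬝ᵥ Q.mulVec v)) ≤ t * (φ t - φ 0) := by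
      rw [hphi]
      calc μ * (t ^ 2 * (v ⬝ᵥ Q.mulVec v)) ≤
          t * (v ⬝ᵥ F' (xstar + t • v)) - t * (v ⬝ᵥ F' xstar) := hsum
        _ = t * (F' (xstar + t • v) ⬝ᵥ v - F' xstar ⬝ᵥ v) := by
            rw [dotProduct_comm, dotProduct_comm v]; ring
    have hslope_eq : slope φ 0 t = (t * (φ t - φ 0)) / t ^ 2 := by
      rw [slope_def_field]
      field_simp
      ring
    rw [hslope_eq, le_div_iff₀ (by positivity : (0:ℝ) < t ^ 2)]
    nlinarith [hsum2]
  have hlim := hasDerivAt_iff_tendsto_slope.mp hder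
  have hle : μ * (v ⬝ᵥ Q.mulVec v) ≤ v ⬝ᵥ (F'' xstar).mulVec v :=
    ge_of_tendsto hlim (eventually_nhdsWithin_of_forall fun t ht => hslope t ht)
  rw [hv] at hle
  simp only [dotProduct_zero] at hle
  nlinarith [hN, hμ]

lemma entry_integral {d : ℕ} (P P₂ : Matrix (Fin d) (Fin d) ℝ)
    (X : ℝ → Matrix (Fin d) (Fin d) ℝ) (hX : ∀ i j, Continuous fun t => X t i j)
    (XX : Matrix (Fin d) (Fin d) ℝ) (hXX : ∀ i j, XX i j = ∫ t in (0:ℝ)..1, X t i j)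
    (i j : Fin d) :
    (P * XX * P₂) i j = ∫ t in (0:ℝ)..1, (P * X t * P₂) i j := by
  simp only [Matrix.mul_apply]
  have hint : ∀ (k l : Fin d), IntervalIntegrable (fun t => X t k l) volume 0 1 :=
    fun k l => (hX k l).intervalIntegrable 0 1
  have step1 : ∀ l : Fin d, (∑ k, P i k * XX k l) * P₂ l j
      = ∫ t in (0:ℝ)..1, (∑ k, P i k * X t k l) * P₂ l j := by
    intro l
    rw [intervalIntegral.integral_mul_const, intervalIntegral.integral_finset_sum (f := fun k t => P i k * X t k l)
      (fun k _ => ((continuous_const.mul (hX k l) : Continuous fun t => P i k * X t k l).intervalIntegrable 0 1))]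
    congr 1
    refine Finset.sum_congr rfl fun k _ => ?_
    rw [hXX k l, intervalIntegral.integral_const_mul]
  rw [Finset.sum_congr rfl fun l _ => step1 l,
    ← intervalIntegral.integral_finset_sum]
  intro l _
  exact (((continuous_finset_sum _ fun k _ => (continuous_const.mul (hX k l) : Continuous fun t => P i k * X t k l)).mul
    continuous_const : Continuous fun t => (∑ k, P i k * X t k l) * P₂ l j)).intervalIntegrable 0 1

lemma entry_cont {d : ℕ} (P P₂ : Matrix (Fin d) (Fin d) ℝ)
    (X : ℝ → Matrix (Fin d) (Fin d) ℝ) (hX : ∀ i j, Continuous fun t => X t i j)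
    (i j : Fin d) : Continuous fun t => (P * X t * P₂) i j := by
  simp only [Matrix.mul_apply]
  exact continuous_finset_sum _ fun l _ =>
    (continuous_finset_sum _ fun k _ => continuous_const.mul (hX k l)).mul continuous_const

lemma mulvec_cont {d : ℕ} (W : ℝ → Matrix (Fin d) (Fin d) ℝ)
    (hW : ∀ i j, Continuous fun t => W t i j) (z : Fin d → ℝ) :
    Continuous fun t => (toE ((W t).mulVec z) : EuclideanSpace ℝ (Fin d)) := by
  refine (PiLp.continuous_toLp (p := 2) (β := fun _ : Fin d => ℝ)).comp ?_
  refine continuous_pi fun i => ?_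
  simp only [Matrix.mulVec, dotProduct]
  exact continuous_finset_sum _ fun j _ => (hW i j).mul continuous_const

lemma vec_integral {d : ℕ} (W : ℝ → Matrix (Fin d) (Fin d) ℝ)
    (hW : ∀ i j, Continuous fun t => W t i j)
    (WW : Matrix (Fin d) (Fin d) ℝ) (hWW : ∀ i j, WW i j = ∫ t in (0:ℝ)..1, W t i j)
    (z : Fin d → ℝ) :
    toE (WW.mulVec z) = ∫ t in (0:ℝ)..1, toE ((W t).mulVec z) := by
  have hcont : Continuous fun t => (toE ((W t).mulVec z) : EuclideanSpace ℝ (Fin d)) :=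
    mulvec_cont W hW z
  have hint : IntervalIntegrable (fun t => toE ((W t).mulVec z)) volume 0 1 :=
    hcont.intervalIntegrable 0 1
  have : ∀ i : Fin d, (toE (WW.mulVec z) : EuclideanSpace ℝ (Fin d)) i
      = (∫ t in (0:ℝ)..1, toE ((W t).mulVec z) : EuclideanSpace ℝ (Fin d)) i := by
    intro i
    have hproj := (EuclideanSpace.proj (𝕜 := ℝ) i).intervalIntegral_comp_comm hint
    have hR : (∫ t in (0:ℝ)..1, toE ((W t).mulVec z) : EuclideanSpace ℝ (Fin d)) i
        = ∫ t in (0:ℝ)..1, ((W t).mulVec z) i := by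
      rw [show (∫ t in (0:ℝ)..1, toE ((W t).mulVec z) : EuclideanSpace ℝ (Fin d)) i
          = (EuclideanSpace.proj (𝕜 := ℝ) i) (∫ t in (0:ℝ)..1, toE ((W t).mulVec z)) from rfl,
        ← hproj]
      rfl
    rw [hR]
    show (WW.mulVec z) i = _
    simp only [Matrix.mulVec, dotProduct]
    rw [intervalIntegral.integral_finset_sum (f := fun j t => W t i j * z j) (fun j _ =>
      ((hW i j).mul continuous_const : Continuous fun t => W t i j * z j).intervalIntegrable 0 1)]
    refine Finset.sum_congr rfl fun j _ => ?_
    rw [hWW i j, intervalIntegral.integral_mul_const]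
  ext i
  exact this i

/-- Lemma `optimal_trace_when_close`: the averaged Hessian
`B(x) = ∫₀¹ ∇²F(x⋆ + t(x − x⋆)) dt` (defined entrywise) is invertible near `x⋆`,
with `‖B(x)⁻¹ ∇²F(x⋆)‖ ≤ 2`. -/
theorem statement11
    {d : ℕ} (hd : 1 ≤ d)
    (Q : Matrix (Fin d) (Fin d) ℝ) (hQ : Q.PosDef)
    (F : (Fin d → ℝ) → ℝ) (F' : (Fin d → ℝ) → Fin d → ℝ)
    (F'' : (Fin d → ℝ) → Matrix (Fin d) (Fin d) ℝ)
    -- `F` is twice continuously differentiable with gradient `F'` and Hessian `F''`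
    (hFdiff : ∀ y, HasFDerivAt F (dotCLM (F' y)) y)
    (hFdiff2 : ∀ y, HasFDerivAt F' (mulVecCLM (F'' y)) y)
    (hF''cont : Continuous F'')
    -- μ-strong convexity w.r.t. `‖·‖`, with unique minimizer `x⋆`
    (μ : ℝ) (hμ : 0 < μ)
    (hsc : ∀ x y, μ / 2 * (qnorm Q (y - x)) ^ 2 ≤ F y - F x - (F' x) ⬝ᵥ (y - x))
    (xstar : Fin d → ℝ) (hmin : ∀ y, F xstar ≤ F y)
    -- Lipschitz Hessian in the instance-specific norm
    (LH : ℝ) (hLH : 0 < LH)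
    (hHessLip : ∀ x x',
      qOpNorm Q ((F'' xstar)⁻¹ * (F'' x - F'' x')) ≤ LH * qnorm Q (x - x')) :
    ∀ x : Fin d → ℝ, qnorm Q (x - xstar) ≤ 1 / (2 * LH) →
      IsUnit (Matrix.of fun i j =>
          ∫ t in (0 : ℝ)..1, F'' (xstar + t • (x - xstar)) i j)
      ∧ qOpNorm Q
          ((Matrix.of fun i j =>
            ∫ t in (0 : ℝ)..1, F'' (xstar + t • (x - xstar)) i j)⁻¹ * F'' xstar)
        ≤ 2 := by
  intro x hx
  -- the square root of Q
  open scoped MatrixOrder in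
  set S : Matrix (Fin d) (Fin d) ℝ := CFC.sqrt Q with hSdef
  open scoped MatrixOrder in
  have hSherm : Sᴴ = S := (CFC.sqrt_nonneg Q).posSemidef.isHermitian
  have hS : Sᵀ = S := by
    ext i j
    have h2 : Sᴴ i j = S i j := by rw [hSherm]
    simpa [Matrix.conjTranspose_apply] using h2
  open scoped MatrixOrder in
  have hQS : Q = S * S := (CFC.sqrt_mul_sqrt_self Q hQ.posSemidef.nonneg).symm
  have hQ' : (S * S).PosDef := hQS ▸ hQ
  have hSdet : IsUnit S.det := by
    have hdQ : 0 < Q.det := hQ.det_pos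
    rw [hQS, Matrix.det_mul] at hdQ
    rw [isUnit_iff_ne_zero]
    intro h
    rw [h] at hdQ
    simp at hdQ
  rw [hQS] at hsc hHessLip hx ⊢
  -- notation
  set A : Matrix (Fin d) (Fin d) ℝ := F'' xstar with hAdef
  have hA : IsUnit A := hessian_isUnit (S*S) hQ' F F' F'' hFdiff2 μ hμ hsc xstar
  have hAdet : IsUnit A.det := (Matrix.isUnit_iff_isUnit_det A).mp hA
  set γ : ℝ → (Fin d → ℝ) := fun t => xstar + t • (x - xstar) with hγdef
  have hγcont : Continuous γ := by
    apply continuous_const.add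
    exact (continuous_id.smul continuous_const)
  have hF''γ : ∀ i j, Continuous fun t => F'' (γ t) i j :=
    fun i j => (hF''cont.comp hγcont).matrix_elem i j
  set B : Matrix (Fin d) (Fin d) ℝ :=
    Matrix.of (fun i j => ∫ t in (0:ℝ)..1, F'' (xstar + t • (x - xstar)) i j) with hBdef
  set r : ℝ := qnorm (S*S) (x - xstar) with hrdef
  have hr0 : 0 ≤ r := qnorm_nonneg' _ _
  -- entries of B - A are integrals
  have hXcont : ∀ i j, Continuous fun t => (F'' (γ t) - A) i j := by
    intro i j
    simp only [Matrix.sub_apply]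
    exact (hF''γ i j).sub continuous_const
  have hBA : ∀ k l, (B - A) k l = ∫ t in (0:ℝ)..1, (F'' (γ t) - A) k l := by
    intro k l
    simp only [Matrix.sub_apply]
    rw [intervalIntegral.integral_sub ((hF''γ k l).intervalIntegrable 0 1)
      intervalIntegrable_const]
    simp [hBdef, hγdef, intervalIntegral.integral_const]
  -- the conjugation map
  set Φ : Matrix (Fin d) (Fin d) ℝ → (EuclideanSpace ℝ (Fin d) →L[ℝ] EuclideanSpace ℝ (Fin d)) :=
    fun X => Matrix.toEuclideanCLM (𝕜 := ℝ) (S * X * S⁻¹) with hΦdef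
  have hSinvS : S⁻¹ * S = 1 := Matrix.nonsing_inv_mul S hSdet
  have hSSinv : S * S⁻¹ = 1 := Matrix.mul_nonsing_inv S hSdet
  have hqop : ∀ M, qOpNorm (S*S) M = ‖Φ M‖ := fun M => qOpNorm_eq hd S hS hQ' hSdet M
  -- bound on ‖Φ (A⁻¹ * (F'' (γ t) - A))‖
  have hMt : ∀ t : ℝ, t ∈ Set.Icc (0:ℝ) 1 → ‖Φ (A⁻¹ * (F'' (γ t) - A))‖ ≤ LH * r * t := by
    intro t ht
    rw [← hqop]
    have h := hHessLip (γ t) xstar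
    have hγx : γ t - xstar = t • (x - xstar) := add_sub_cancel_left xstar _
    rw [hγx, qnorm_smul S hS, abs_of_nonneg ht.1] at h
    calc qOpNorm (S*S) (A⁻¹ * (F'' (γ t) - A)) ≤ LH * (t * r) := h
      _ = LH * r * t := by ring
  -- the matrix C = A⁻¹ (B - A), with ‖Φ C‖ ≤ 1/4
  set C : Matrix (Fin d) (Fin d) ℝ := A⁻¹ * (B - A) with hCdef
  have hWcont : ∀ i j, Continuous fun t => ((S * A⁻¹) * (F'' (γ t) - A) * S⁻¹) i j :=
    fun i j => entry_cont (S * A⁻¹) S⁻¹ _ hXcont i j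
  have hWW : ∀ i j, ((S * A⁻¹) * (B - A) * S⁻¹) i j
      = ∫ t in (0:ℝ)..1, ((S * A⁻¹) * (F'' (γ t) - A) * S⁻¹) i j :=
    fun i j => entry_integral (S * A⁻¹) S⁻¹ _ hXcont (B - A) hBA i j
  have hSCS : S * C * S⁻¹ = (S * A⁻¹) * (B - A) * S⁻¹ := by
    rw [hCdef, ← Matrix.mul_assoc]
  have hSMS : ∀ t : ℝ, S * (A⁻¹ * (F'' (γ t) - A)) * S⁻¹
      = (S * A⁻¹) * (F'' (γ t) - A) * S⁻¹ := by
    intro t; rw [← Matrix.mul_assoc]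
  have hΦC : ‖Φ C‖ ≤ 1/4 := by
    refine ContinuousLinearMap.opNorm_le_bound _ (by norm_num) fun w => ?_
    set z : Fin d → ℝ := toE.symm w with hzdef
    have hwz : toE z = w := toE.apply_symm_apply w
    have happ : Φ C w = toE (((S * A⁻¹) * (B - A) * S⁻¹).mulVec z) := by
      rw [hΦdef]
      simp only
      rw [← hwz, phi_apply, hSCS]
    have hvint := vec_integral _ hWcont _ hWW z
    rw [happ, hvint]
    have hnormle := intervalIntegral.norm_integral_le_integral_norm
      (f := fun t => (toE (((S * A⁻¹) * (F'' (γ t) - A) * S⁻¹).mulVec z) : EuclideanSpace ℝ (Fin d)))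
      (μ := volume) (a := 0) (b := 1) (by norm_num)
    refine le_trans hnormle ?_
    have hgcont : Continuous fun t =>
        (toE (((S * A⁻¹) * (F'' (γ t) - A) * S⁻¹).mulVec z) : EuclideanSpace ℝ (Fin d)) :=
      mulvec_cont _ hWcont z
    have hptwise : ∀ t ∈ Set.Icc (0:ℝ) 1,
        ‖(toE (((S * A⁻¹) * (F'' (γ t) - A) * S⁻¹).mulVec z) : EuclideanSpace ℝ (Fin d))‖
        ≤ (LH * r * ‖w‖) * t := by
      intro t ht
      have hphit : Φ (A⁻¹ * (F'' (γ t) - A)) w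
          = toE (((S * A⁻¹) * (F'' (γ t) - A) * S⁻¹).mulVec z) := by
        rw [hΦdef]
        simp only
        rw [← hwz, phi_apply, hSMS]
      rw [← hphit]
      calc ‖Φ (A⁻¹ * (F'' (γ t) - A)) w‖
          ≤ ‖Φ (A⁻¹ * (F'' (γ t) - A))‖ * ‖w‖ := ContinuousLinearMap.le_opNorm _ _
        _ ≤ (LH * r * t) * ‖w‖ :=
            mul_le_mul_of_nonneg_right (hMt t ht) (norm_nonneg w)
        _ = (LH * r * ‖w‖) * t := by ring
    have hmono := intervalIntegral.integral_mono_on (μ := volume) (by norm_num : (0:ℝ) ≤ 1)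
      (hgcont.norm.intervalIntegrable 0 1)
      ((continuous_const.mul continuous_id).intervalIntegrable 0 1) hptwise
    refine le_trans (by simpa only [id_eq, Pi.mul_apply] using hmono) ?_
    have : (∫ t in (0:ℝ)..1, (LH * r * ‖w‖) * t) = (LH * r * ‖w‖) * (1/2) := by
      rw [intervalIntegral.integral_const_mul, integral_id]
      norm_num
    rw [this]
    have hLHr : LH * r ≤ 1/2 := by
      have h2 : r ≤ 1 / (2 * LH) := hx
      calc LH * r ≤ LH * (1 / (2 * LH)) := by
            exact mul_le_mul_of_nonneg_left h2 hLH.le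
        _ = 1/2 := by field_simp
    nlinarith [norm_nonneg w]
  -- Neumann series argument
  have hconjmul : ∀ X Y : Matrix (Fin d) (Fin d) ℝ,
      (S * X * S⁻¹) * (S * Y * S⁻¹) = S * (X * Y) * S⁻¹ := by
    intro X Y
    simp only [Matrix.mul_assoc]
    rw [← Matrix.mul_assoc S⁻¹ S, hSinvS, Matrix.one_mul]
  have hΦmul : ∀ X Y, Φ (X * Y) = Φ X * Φ Y := by
    intro X Y
    rw [hΦdef]
    simp only
    rw [← hconjmul, _root_.map_mul]
  have hΦone : Φ (1 : Matrix (Fin d) (Fin d) ℝ) = 1 := by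
    rw [hΦdef]
    simp only
    rw [Matrix.mul_one, hSSinv, _root_.map_one]
  set K : Matrix (Fin d) (Fin d) ℝ := A⁻¹ * B with hKdef
  have hKC : K = C + 1 := by
    rw [hKdef, hCdef, Matrix.mul_sub, Matrix.nonsing_inv_mul A hAdet]
    abel
  have hΦK : Φ K = 1 + Φ C := by
    rw [hKC]
    rw [hΦdef]
    simp only
    rw [Matrix.mul_add, Matrix.add_mul, map_add, Matrix.mul_one]
    rw [show S * S⁻¹ = (1 : Matrix (Fin d) (Fin d) ℝ) from hSSinv, _root_.map_one]
    exact add_comm _ _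
  have hΦKunit : IsUnit (Φ K) := by
    have h1 : ‖-(Φ C)‖ < 1 := by
      rw [norm_neg]
      linarith
    have := isUnit_one_sub_of_norm_lt_one h1
    rwa [sub_neg_eq_add, ← hΦK] at this
  -- transfer invertibility back to matrices
  have hconj_elim : ∀ X : Matrix (Fin d) (Fin d) ℝ, S⁻¹ * (S * X * S⁻¹) * S = X := by
    intro X
    simp only [Matrix.mul_assoc]
    rw [hSinvS, Matrix.mul_one, ← Matrix.mul_assoc S⁻¹ S, hSinvS, Matrix.one_mul]
  have hconjmul' : ∀ Y Z : Matrix (Fin d) (Fin d) ℝ,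
      (S⁻¹ * Y * S) * (S⁻¹ * Z * S) = S⁻¹ * (Y * Z) * S := by
    intro Y Z
    simp only [Matrix.mul_assoc]
    rw [← Matrix.mul_assoc S S⁻¹, hSSinv, Matrix.one_mul]
  have hKunit : IsUnit K := by
    obtain ⟨u, hu⟩ := hΦKunit
    set V : Matrix (Fin d) (Fin d) ℝ :=
      (Matrix.toEuclideanCLM (n := Fin d) (𝕜 := ℝ)).symm ↑u⁻¹ with hVdef
    have hKrepr : K = S⁻¹ * ((Matrix.toEuclideanCLM (n := Fin d) (𝕜 := ℝ)).symm ↑u) * S := by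
      have : (Matrix.toEuclideanCLM (n := Fin d) (𝕜 := ℝ)).symm ↑u = S * K * S⁻¹ := by
        rw [hu, hΦdef]
        simp only
        exact StarAlgEquiv.symm_apply_apply _ _
      rw [this, hconj_elim]
    have hmul1 : K * (S⁻¹ * V * S) = 1 := by
      rw [hKrepr, hconjmul', ← _root_.map_mul, Units.mul_inv, _root_.map_one, Matrix.mul_one, hSinvS]
    exact ⟨⟨K, S⁻¹ * V * S, hmul1, mul_eq_one_comm.mp hmul1⟩, rfl⟩
  have hKdet : IsUnit K.det := (Matrix.isUnit_iff_isUnit_det K).mp hKunit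
  have hBAK : B = A * K := by
    rw [hKdef, ← Matrix.mul_assoc, Matrix.mul_nonsing_inv A hAdet, Matrix.one_mul]
  constructor
  · rw [hBAK]
    exact hA.mul hKunit
  · have hBinvA : B⁻¹ * A = K⁻¹ := by
      rw [hBAK, Matrix.mul_inv_rev, Matrix.mul_assoc, Matrix.nonsing_inv_mul A hAdet,
        Matrix.mul_one]
    rw [hBinvA, hqop]
    -- ‖Φ K⁻¹‖ ≤ 2
    have hinv1 : Φ K⁻¹ * Φ K = 1 := by
      rw [← hΦmul, Matrix.nonsing_inv_mul K hKdet, hΦone]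
    set w' := Φ K⁻¹ with hw'def
    have hw'eq : w' = 1 - w' * Φ C := by
      have : w' * (1 + Φ C) = 1 := by rw [← hΦK]; exact hinv1
      rw [mul_add, mul_one] at this
      exact eq_sub_of_add_eq this
    have hnorm1 : ‖(1 : EuclideanSpace ℝ (Fin d) →L[ℝ] EuclideanSpace ℝ (Fin d))‖ ≤ 1 := by
      rw [ContinuousLinearMap.one_def]
      exact ContinuousLinearMap.norm_id_le
    have hb : ‖w'‖ ≤ 1 + ‖w'‖ * (1/4) := by
      calc ‖w'‖ = ‖1 - w' * Φ C‖ := by rw [← hw'eq]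
        _ ≤ ‖(1 : EuclideanSpace ℝ (Fin d) →L[ℝ] EuclideanSpace ℝ (Fin d))‖ + ‖w' * Φ C‖ :=
            norm_sub_le _ _
        _ ≤ 1 + ‖w'‖ * ‖Φ C‖ := add_le_add hnorm1 (norm_mul_le _ _)
        _ ≤ 1 + ‖w'‖ * (1/4) := by
            exact add_le_add_right (mul_le_mul_of_nonneg_left hΦC (norm_nonneg _)) 1
    linarith [norm_nonneg w']

end
end
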